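/- arXiv:2104.03372 — 4 statements merged into one kernel-verified Lean document; each statement's English description precedes it below -/
import Mathlib

section
/- Let n ≥ 2 and i ∈ [0..n−1]. Let p_i := p_{i,≥i+1} be the probability that standard bit mutation with rate 1/n applied to a string with exactly i ones produces a string with strictly more ones. Then (1−1/n)^{n−1} · (n−i)/n ≤ p_i ≤ (1−1/n)^{n−1} · (n−i)/n + (n−i)(n−i−1)/(2n²). -/
open MeasureTheory Finset
open scoped ENNReal

/-- Probability that standard bit mutation with mutation rate `p` applied to
`x ∈ {0,1}^n` produces exactly `y` (each bit flips independently with probability `p`). -/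
noncomputable def mutProb (n : ℕ) (p : ℝ) (x y : Fin n → Bool) : ℝ :=
  p ^ hammingDist x y * (1 - p) ^ (n - hammingDist x y)

/-- Transition probability of one iteration of the (1+1) EA with mutation rate `p`
maximizing `f`: from current search point `x`, an offspring `y` is sampled by standard
bit mutation, and it replaces `x` if and only if `f y ≥ f x`. -/
noncomputable def stepProb (n : ℕ) (p : ℝ) (f : (Fin n → Bool) → ℝ)
    (x z : Fin n → Bool) : ℝ :=
  ∑ y : Fin n → Bool, if (if f x ≤ f y then y else x) = z then mutProb n p x y else 0

/-- `Y` is (the current-search-point process of) a run of the (1+1) EA with mutation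
rate `p` maximizing `f`, realized on the probability space `(Ω, μ)`: each `Y t` is
measurable, and conditional on the current search point being `x`, the next search
point is `z` with probability `stepProb n p f x z`. -/
def IsEARun {Ω : Type*} [MeasurableSpace Ω] (μ : Measure Ω)
    (n : ℕ) (p : ℝ) (f : (Fin n → Bool) → ℝ) (Y : ℕ → Ω → Fin n → Bool) : Prop :=
  (∀ t, Measurable (Y t)) ∧
  ∀ (t : ℕ) (x z : Fin n → Bool),
    μ {ω | Y (t + 1) ω = z ∧ Y t ω = x}
      = ENNReal.ofReal (stepProb n p f x z) * μ {ω | Y t ω = x}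

/-- The number of leading ones of a bit string. -/
def leadingOnes (n : ℕ) (x : Fin n → Bool) : ℕ :=
  (Finset.univ.filter fun i : Fin n => ∀ j ≤ i, x j = true).card

/-- The number of ones of a bit string. -/
def onesCount (n : ℕ) (x : Fin n → Bool) : ℕ :=
  (Finset.univ.filter fun i : Fin n => x i = true).card

/-- `levelProb n k l` is `p_{k,l}`: the probability that standard bit mutation with
rate `1/n` applied to an `n`-bit string with exactly `k` ones yields a string with
exactly `l` ones (witnessed by the string whose first `k` bits are one). -/
noncomputable def levelProb (n k l : ℕ) : ℝ :=
  ∑ y ∈ Finset.univ.filter (fun y : Fin n → Bool => onesCount n y = l),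
    mutProb n (1 / n) (fun i => decide ((i : ℕ) < k)) y

/-- `levelProbGe n k l` is `p_{k,≥l} = ∑_{j=l}^n p_{k,j}`. -/
noncomputable def levelProbGe (n k l : ℕ) : ℝ :=
  ∑ j ∈ Finset.Icc l n, levelProb n k j

section LeaveLevelAux

lemma mutProb_eq_prod {n : ℕ} (p : ℝ) (x y : Fin n → Bool) :
    mutProb n p x y = ∏ j, (if y j = x j then (1 - p) else p) := by
  classical
  rw [Finset.prod_ite (fun _ => 1 - p) (fun _ => p), Finset.prod_const, Finset.prod_const]
  have hcard : (univ.filter fun j : Fin n => ¬ y j = x j).card = hammingDist x y := by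
    unfold hammingDist
    apply Finset.card_bij (fun a _ => a) <;> simp +contextual [ne_comm, eq_comm]
  have hsum := Finset.card_filter_add_card_filter_not
    (s := (univ : Finset (Fin n))) (p := fun j => y j = x j)
  simp only [Finset.card_univ, Fintype.card_fin] at hsum
  rw [hcard] at hsum
  have h2 : (univ.filter fun j : Fin n => y j = x j).card = n - hammingDist x y := by omega
  rw [h2, hcard, mutProb, mul_comm]

lemma sum_prod_bool {n : ℕ} (F : Fin n → Bool → ℝ) :
    ∑ y : Fin n → Bool, ∏ j, F j (y j) = ∏ j, (F j true + F j false) := by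
  classical
  rw [← Fintype.piFinset_univ, Finset.sum_prod_piFinset]
  congr 1
  ext j
  exact Fintype.sum_bool _

lemma marg2 {n : ℕ} (p : ℝ) (x : Fin n → Bool) (j k : Fin n) (hjk : j ≠ k)
    (hj : x j = false) (hk : x k = false) :
    ∑ y : Fin n → Bool, (if y j = true ∧ y k = true then mutProb n p x y else 0)
      = p ^ 2 := by
  classical
  have key : ∀ y : Fin n → Bool,
      (if y j = true ∧ y k = true then mutProb n p x y else 0)
        = ∏ j' : Fin n, (if (j' = j ∨ j' = k) ∧ y j' = false then 0
            else if y j' = x j' then (1 - p) else p) := by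
    intro y
    by_cases h : y j = true ∧ y k = true
    · rw [if_pos h, mutProb_eq_prod]
      apply Finset.prod_congr rfl
      intro j' _
      have hcond : ¬ ((j' = j ∨ j' = k) ∧ y j' = false) := by
        rintro ⟨hjk', hfalse⟩
        rcases hjk' with rfl | rfl
        · rw [h.1] at hfalse; exact Bool.noConfusion hfalse
        · rw [h.2] at hfalse; exact Bool.noConfusion hfalse
      rw [if_neg hcond]
    · rw [if_neg h]
      symm
      have : y j = false ∨ y k = false := by
        cases h1 : y j
        · exact Or.inl rfl
        cases h2 : y k
        · exact Or.inr rfl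
        · exact absurd ⟨h1, h2⟩ h
      rcases this with hf | hf
      · exact Finset.prod_eq_zero (Finset.mem_univ j) (by rw [if_pos ⟨Or.inl rfl, hf⟩])
      · exact Finset.prod_eq_zero (Finset.mem_univ k) (by rw [if_pos ⟨Or.inr rfl, hf⟩])
  simp only [key]
  rw [sum_prod_bool (F := fun j' b => if (j' = j ∨ j' = k) ∧ b = false then 0
      else if b = x j' then (1 - p) else p)]
  trans (∏ j' : Fin n, if j' ∈ ({j, k} : Finset (Fin n)) then p else 1)
  · refine Finset.prod_congr rfl fun j' _ => ?_
    by_cases hc : j' = j ∨ j' = k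
    · have hx : x j' = false := by rcases hc with rfl | rfl <;> assumption
      simp [hc, hx]
    · have hm : j' ∉ ({j, k} : Finset (Fin n)) := by
        simp only [Finset.mem_insert, Finset.mem_singleton]; exact hc
      rw [if_neg hm]
      cases hxx : x j' <;> simp [hxx, hc] <;> ring
  · rw [Finset.prod_ite_mem, Finset.univ_inter, Finset.prod_pair hjk, sq]

lemma card_filter_coe_lt {n i : ℕ} (hi : i ≤ n) :
    (Finset.univ.filter fun j : Fin n => (j : ℕ) < i).card = i := by
  have : (Finset.univ.filter fun j : Fin n => (j : ℕ) < i)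
      = (Finset.univ : Finset (Fin i)).map
          ⟨fun k => Fin.castLE hi k, Fin.castLE_injective hi⟩ := by
    ext j
    simp only [Finset.mem_filter, Finset.mem_univ, true_and, Finset.mem_map,
      Function.Embedding.coeFn_mk]
    constructor
    · intro hj; exact ⟨⟨(j : ℕ), hj⟩, by ext; simp⟩
    · rintro ⟨k, rfl⟩; exact k.2
  rw [this, Finset.card_map, Finset.card_univ, Fintype.card_fin]

lemma levelProbGe_eq_sum (n i : ℕ) :
    levelProbGe n i (i + 1)
      = ∑ y ∈ Finset.univ.filter (fun y : Fin n → Bool => i + 1 ≤ onesCount n y),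
          mutProb n (1 / n) (fun j => decide ((j : ℕ) < i)) y := by
  classical
  set S := Finset.univ.filter (fun y : Fin n → Bool => i + 1 ≤ onesCount n y) with hSdef
  have hmap : ∀ y ∈ S, onesCount n y ∈ Finset.Icc (i + 1) n := by
    intro y hy
    simp only [hSdef, Finset.mem_filter, Finset.mem_univ, true_and] at hy
    refine Finset.mem_Icc.2 ⟨hy, ?_⟩
    exact le_trans (Finset.card_filter_le _ _) (by simp)
  rw [← Finset.sum_fiberwise_of_maps_to hmap (fun y => mutProb n (1 / n) (fun j => decide ((j : ℕ) < i)) y)]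
  unfold levelProbGe levelProb
  refine Finset.sum_congr rfl fun j hj => ?_
  refine Finset.sum_congr ?_ fun _ _ => rfl
  have hij : i + 1 ≤ j := (Finset.mem_Icc.1 hj).1
  ext y
  simp only [hSdef, Finset.mem_filter, Finset.mem_univ, true_and]
  constructor
  · intro h; exact ⟨by omega, h⟩
  · rintro ⟨-, h⟩; exact h


end LeaveLevelAux

/-- For `n ≥ 2` and `i ∈ [0..n-1]`, the probability
`p_i = p_{i,≥i+1}` that standard bit mutation with rate `1/n` applied to a string with
exactly `i` ones produces a string with strictly more ones satisfies
`(1-1/n)^{n-1}·(n-i)/n ≤ p_i ≤ (1-1/n)^{n-1}·(n-i)/n + (n-i)(n-i-1)/(2n²)`. -/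
theorem leave_level_probability_bounds
    (n i : ℕ) (hn : 2 ≤ n) (hi : i < n) :
    (1 - 1 / (n : ℝ)) ^ (n - 1) * ((n : ℝ) - i) / n ≤ levelProbGe n i (i + 1) ∧
    levelProbGe n i (i + 1)
      ≤ (1 - 1 / (n : ℝ)) ^ (n - 1) * ((n : ℝ) - i) / n
          + ((n : ℝ) - i) * ((n : ℝ) - i - 1) / (2 * (n : ℝ) ^ 2) := by
  classical
  have hn0 : (0 : ℝ) < n := by
    have : (2 : ℝ) ≤ n := by exact_mod_cast hn
    linarith
  set p : ℝ := 1 / (n : ℝ) with hpdef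
  set x : Fin n → Bool := fun j => decide ((j : ℕ) < i) with hxdef
  have hp0 : 0 ≤ p := by positivity
  have hq0 : 0 ≤ 1 - p := by
    rw [hpdef, sub_nonneg]
    rw [div_le_one hn0]
    exact_mod_cast Nat.one_le_of_lt hn
  have hmut0 : ∀ y : Fin n → Bool, 0 ≤ mutProb n p x y := fun y =>
    mul_nonneg (pow_nonneg hp0 _) (pow_nonneg hq0 _)
  set Z : Finset (Fin n) := Finset.univ.filter (fun j => x j = false) with hZdef
  have hZmem : ∀ j : Fin n, j ∈ Z ↔ ¬ ((j : ℕ) < i) := by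
    intro j
    simp [hZdef, hxdef]
  have hZcard : Z.card = n - i := by
    have h1 : Z = Finset.univ.filter (fun j : Fin n => ¬ ((j : ℕ) < i)) := by
      ext j; rw [hZmem j]; simp
    have h2 := Finset.card_filter_add_card_filter_not
      (s := (Finset.univ : Finset (Fin n))) (p := fun j : Fin n => (j : ℕ) < i)
    rw [card_filter_coe_lt hi.le] at h2
    simp only [Finset.card_univ, Fintype.card_fin] at h2
    rw [h1]; omega
  have hxcount : (Finset.univ.filter fun j => x j = true).card = i := by
    have : (Finset.univ.filter fun j => x j = true)
        = Finset.univ.filter (fun j : Fin n => (j : ℕ) < i) := by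
      ext j; simp [hxdef]
    rw [this, card_filter_coe_lt hi.le]
  set S : Finset (Fin n → Bool) :=
    Finset.univ.filter (fun y => i + 1 ≤ onesCount n y) with hSdef
  have hS : levelProbGe n i (i + 1) = ∑ y ∈ S, mutProb n p x y := by
    rw [levelProbGe_eq_sum n i, ← hpdef, ← hxdef]
  -- the set A of strings obtained from x by flipping exactly one zero bit
  set A : Finset (Fin n → Bool) := Z.image (fun j => Function.update x j true) with hAdef
  have hinj : ∀ j ∈ Z, ∀ k ∈ Z, Function.update x j true = Function.update x k true → j = k := by
    intro j hj k hk h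
    by_contra hne
    have hxj : x j = false := (Finset.mem_filter.1 hj).2
    have hcf := congrFun h j
    rw [Function.update_self, Function.update_apply, if_neg hne, hxj] at hcf
    exact Bool.noConfusion hcf
  have hupd_ones : ∀ j ∈ Z, onesCount n (Function.update x j true) = i + 1 := by
    intro j hj
    have hxj : x j = false := (Finset.mem_filter.1 hj).2
    unfold onesCount
    have hset : (Finset.univ.filter fun j' => Function.update x j true j' = true)
        = insert j (Finset.univ.filter fun j' => x j' = true) := by
      ext j'
      simp only [Finset.mem_filter, Finset.mem_univ, true_and, Finset.mem_insert,
        Function.update_apply]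
      by_cases h : j' = j <;> simp [h]
    rw [hset, Finset.card_insert_of_notMem (by simp [hxj]), hxcount]
  have hA_sub : A ⊆ S := by
    intro y hy
    rw [hAdef, Finset.mem_image] at hy
    obtain ⟨j, hj, rfl⟩ := hy
    simp only [hSdef, Finset.mem_filter, Finset.mem_univ, true_and]
    rw [hupd_ones j hj]
  have hmutA : ∀ j ∈ Z, mutProb n p x (Function.update x j true) = p * (1 - p) ^ (n - 1) := by
    intro j hj
    have hxj : x j = false := (Finset.mem_filter.1 hj).2
    have hd : hammingDist x (Function.update x j true) = 1 := by
      unfold hammingDist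
      have : (Finset.univ.filter fun j' => x j' ≠ Function.update x j true j') = {j} := by
        ext j'
        simp only [Finset.mem_filter, Finset.mem_univ, true_and, Finset.mem_singleton,
          Function.update_apply]
        by_cases h : j' = j <;> simp [h, hxj]
      rw [this, Finset.card_singleton]
    rw [mutProb, hd, pow_one]
  have hA_sum : ∑ y ∈ A, mutProb n p x y = ((n : ℝ) - i) * (p * (1 - p) ^ (n - 1)) := by
    rw [hAdef, Finset.sum_image hinj]
    rw [Finset.sum_congr rfl hmutA, Finset.sum_const, hZcard, nsmul_eq_mul]
    congr 1
    push_cast [Nat.cast_sub hi.le]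
    ring
  -- lower bound
  have hlower : (1 - 1 / (n : ℝ)) ^ (n - 1) * ((n : ℝ) - i) / n ≤ levelProbGe n i (i + 1) := by
    rw [hS]
    have h1 : ∑ y ∈ A, mutProb n p x y ≤ ∑ y ∈ S, mutProb n p x y :=
      Finset.sum_le_sum_of_subset_of_nonneg hA_sub (fun y _ _ => hmut0 y)
    rw [hA_sum] at h1
    refine le_trans (le_of_eq ?_) h1
    rw [hpdef]
    ring
  refine ⟨hlower, ?_⟩
  -- upper bound
  set B : Finset (Fin n → Bool) :=
    Finset.univ.filter (fun y => 2 ≤ (Z.filter fun j => y j = true).card) with hBdef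
  have hS_sub : S ⊆ A ∪ B := by
    intro y hy
    simp only [hSdef, Finset.mem_filter, Finset.mem_univ, true_and] at hy
    by_cases hb : 2 ≤ (Z.filter fun j => y j = true).card
    · exact Finset.mem_union_right _ (by simp [hBdef, hb])
    · refine Finset.mem_union_left _ ?_
      set O : Finset (Fin n) := Finset.univ.filter (fun j => x j = true) with hOdef
      have hO : O.card = i := hxcount
      have hdis : Disjoint (O.filter fun j => y j = true) (Z.filter fun j => y j = true) := by
        refine Finset.disjoint_left.2 fun j hjO hjZ => ?_
        have h1 : x j = true := (Finset.mem_filter.1 (Finset.mem_filter.1 hjO).1).2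
        have h2 : x j = false := (Finset.mem_filter.1 (Finset.mem_filter.1 hjZ).1).2
        rw [h1] at h2; exact Bool.noConfusion h2
      have hsplit : onesCount n y
          = (O.filter fun j => y j = true).card + (Z.filter fun j => y j = true).card := by
        unfold onesCount
        rw [← Finset.card_union_of_disjoint hdis]
        congr 1
        ext j
        simp only [Finset.mem_filter, Finset.mem_univ, true_and, Finset.mem_union,
          hOdef, hZdef]
        cases hxx : x j <;> simp [hxx]
      have hO_split : (O.filter fun j => y j = true).card
          + (O.filter fun j => ¬ (y j = true)).card = i := by
        rw [Finset.card_filter_add_card_filter_not, hO]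
      have hb1 : (Z.filter fun j => y j = true).card = 1 := by omega
      have ha0 : (O.filter fun j => ¬ (y j = true)).card = 0 := by omega
      obtain ⟨j₀, hj₀⟩ := Finset.card_eq_one.1 hb1
      have hj₀Z : j₀ ∈ Z ∧ y j₀ = true := by
        have : j₀ ∈ Z.filter fun j => y j = true := by rw [hj₀]; exact Finset.mem_singleton_self j₀
        exact ⟨(Finset.mem_filter.1 this).1, (Finset.mem_filter.1 this).2⟩
      have hOempty : (O.filter fun j => ¬ (y j = true)) = ∅ := Finset.card_eq_zero.1 ha0
      have hyx : y = Function.update x j₀ true := by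
        funext j'
        rw [Function.update_apply]
        by_cases h : j' = j₀
        · rw [if_pos h, h]; exact hj₀Z.2
        · rw [if_neg h]
          cases hxx : x j'
          · -- j' is a zero position different from j₀
            have hjZ : j' ∈ Z := Finset.mem_filter.2 ⟨Finset.mem_univ _, hxx⟩
            cases hyy : y j'
            · rfl
            · exfalso
              have : j' ∈ Z.filter fun j => y j = true :=
                Finset.mem_filter.2 ⟨hjZ, hyy⟩
              rw [hj₀] at this
              exact h (Finset.mem_singleton.1 this)
          · -- j' is a one position, must stay one
            have hjO : j' ∈ O := Finset.mem_filter.2 ⟨Finset.mem_univ _, hxx⟩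
            cases hyy : y j'
            · exfalso
              have : j' ∈ O.filter fun j => ¬ (y j = true) :=
                Finset.mem_filter.2 ⟨hjO, by rw [hyy]; exact Bool.noConfusion⟩
              rw [hOempty] at this
              exact Finset.notMem_empty _ this
            · rfl
      rw [hAdef, Finset.mem_image]
      exact ⟨j₀, hj₀Z.1, hyx.symm⟩
  -- bound on the sum over B
  have hmarg : ∀ jk ∈ Z.offDiag,
      ∑ y ∈ B, (if y jk.1 = true ∧ y jk.2 = true then mutProb n p x y else 0) ≤ p ^ 2 := by
    intro jk hjk
    rw [Finset.mem_offDiag] at hjk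
    have h1 : x jk.1 = false := (Finset.mem_filter.1 hjk.1).2
    have h2 : x jk.2 = false := (Finset.mem_filter.1 hjk.2.1).2
    rw [← marg2 p x jk.1 jk.2 hjk.2.2 h1 h2]
    refine Finset.sum_le_sum_of_subset_of_nonneg (Finset.subset_univ B) fun y _ _ => ?_
    split
    · exact hmut0 y
    · exact le_refl 0
  have hkey : ∀ y ∈ B, 2 * mutProb n p x y
      ≤ ∑ jk ∈ Z.offDiag, (if y jk.1 = true ∧ y jk.2 = true then mutProb n p x y else 0) := by
    intro y hyB
    have hc : 2 ≤ (Z.filter fun j => y j = true).card := by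
      simpa [hBdef] using hyB
    have hsub : ((Z.filter fun j => y j = true)).offDiag
        ⊆ Z.offDiag.filter (fun jk => y jk.1 = true ∧ y jk.2 = true) := by
      intro jk hjk
      rw [Finset.mem_offDiag] at hjk
      obtain ⟨h1, h2, h3⟩ := hjk
      rw [Finset.mem_filter, Finset.mem_offDiag]
      exact ⟨⟨(Finset.mem_filter.1 h1).1, (Finset.mem_filter.1 h2).1, h3⟩,
        (Finset.mem_filter.1 h1).2, (Finset.mem_filter.1 h2).2⟩
    have hcard2 : 2 ≤ (Z.offDiag.filter (fun jk => y jk.1 = true ∧ y jk.2 = true)).card := by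
      refine le_trans ?_ (Finset.card_le_card hsub)
      rw [Finset.offDiag_card]
      set c := (Z.filter fun j => y j = true).card
      have : 2 * c ≤ c * c := by nlinarith
      omega
    have hsum_card : ((Z.offDiag.filter (fun jk => y jk.1 = true ∧ y jk.2 = true)).card : ℝ)
          * mutProb n p x y
        = ∑ jk ∈ Z.offDiag, (if y jk.1 = true ∧ y jk.2 = true then mutProb n p x y else 0) := by
      rw [Finset.card_filter]
      push_cast
      rw [Finset.sum_mul]
      refine Finset.sum_congr rfl fun jk _ => ?_
      split <;> simp
    calc 2 * mutProb n p x y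
        ≤ ((Z.offDiag.filter (fun jk => y jk.1 = true ∧ y jk.2 = true)).card : ℝ)
            * mutProb n p x y := by
          refine mul_le_mul_of_nonneg_right ?_ (hmut0 y)
          exact_mod_cast hcard2
      _ = _ := hsum_card
  have hB_sum : ∑ y ∈ B, mutProb n p x y
      ≤ ((n : ℝ) - i) * (((n : ℝ) - i) - 1) * p ^ 2 / 2 := by
    have h1 : 2 * ∑ y ∈ B, mutProb n p x y ≤ (Z.offDiag.card : ℝ) * p ^ 2 := by
      calc 2 * ∑ y ∈ B, mutProb n p x y
          = ∑ y ∈ B, 2 * mutProb n p x y := by rw [Finset.mul_sum]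
        _ ≤ ∑ y ∈ B, ∑ jk ∈ Z.offDiag,
              (if y jk.1 = true ∧ y jk.2 = true then mutProb n p x y else 0) :=
            Finset.sum_le_sum hkey
        _ = ∑ jk ∈ Z.offDiag, ∑ y ∈ B,
              (if y jk.1 = true ∧ y jk.2 = true then mutProb n p x y else 0) :=
            Finset.sum_comm
        _ ≤ ∑ _jk ∈ Z.offDiag, p ^ 2 := Finset.sum_le_sum hmarg
        _ = (Z.offDiag.card : ℝ) * p ^ 2 := by rw [Finset.sum_const, nsmul_eq_mul]
    have hcast : (Z.offDiag.card : ℝ) = ((n : ℝ) - i) * (((n : ℝ) - i) - 1) := by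
      rw [Finset.offDiag_card, hZcard]
      have hmm : n - i ≤ (n - i) * (n - i) := by nlinarith [Nat.sub_pos_of_lt hi]
      push_cast [Nat.cast_sub hmm, Nat.cast_sub hi.le]
      ring
    rw [hcast] at h1
    linarith
  -- combine
  rw [hS]
  have hsplit_sum : ∑ y ∈ S, mutProb n p x y
      ≤ ∑ y ∈ A, mutProb n p x y + ∑ y ∈ B, mutProb n p x y := by
    have h1 : ∑ y ∈ S, mutProb n p x y ≤ ∑ y ∈ A ∪ B, mutProb n p x y :=
      Finset.sum_le_sum_of_subset_of_nonneg hS_sub (fun y _ _ => hmut0 y)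
    have h2 := Finset.sum_union_inter (s₁ := A) (s₂ := B) (f := fun y => mutProb n p x y)
    have h3 : 0 ≤ ∑ y ∈ A ∩ B, mutProb n p x y :=
      Finset.sum_nonneg fun y _ => hmut0 y
    linarith
  rw [hA_sum] at hsplit_sum
  refine le_trans hsplit_sum ?_
  have heq1 : ((n : ℝ) - i) * (p * (1 - p) ^ (n - 1))
      = (1 - 1 / (n : ℝ)) ^ (n - 1) * ((n : ℝ) - i) / n := by
    rw [hpdef]; ring
  have heq2 : ((n : ℝ) - i) * (((n : ℝ) - i) - 1) * p ^ 2 / 2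
      = ((n : ℝ) - i) * ((n : ℝ) - i - 1) / (2 * (n : ℝ) ^ 2) := by
    rw [hpdef, div_pow, one_pow, mul_one_div, div_div, mul_comm ((n:ℝ)^2) 2]
  linarith [hB_sum]
end

section
/- Let n ≥ 2 and k, ℓ ∈ [0..n] with k < ℓ. Define T̃_{k,ℓ} := Σ_{i=k}^{ℓ−1} 1/p_i, T̃⁺_{k,ℓ} := e_n · n · Σ_{i=k}^{ℓ−1} 1/(n−i), and e_n := (1−1/n)^{−(n−1)}. Then T̃⁺_{k,ℓ} − (1/2) e_n² (ℓ−k) ≤ T̃_{k,ℓ} ≤ T̃⁺_{k,ℓ}. -/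
open MeasureTheory Finset
open scoped ENNReal

private lemma card_filter_lt (n k : ℕ) (hk : k ≤ n) :
    (Finset.univ.filter (fun i : Fin n => (i : ℕ) < k)).card = k := by
  have h := Finset.card_nbij (s := Finset.univ.filter (fun i : Fin n => (i : ℕ) < k))
    (t := Finset.range k) (fun a => (a : ℕ))
    (by intro a ha; simp at ha; simpa using ha)
    (by intro a _ b _ h; exact Fin.val_injective h)
    (by intro m hm
        simp only [Finset.coe_range, Set.mem_Iio] at hm
        exact ⟨⟨m, lt_of_lt_of_le hm hk⟩, by simpa using hm, rfl⟩)
  simpa using h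
private lemma card_filter_not_lt (n k : ℕ) (hk : k ≤ n) :
    (Finset.univ.filter (fun i : Fin n => ¬ (i : ℕ) < k)).card = n - k := by
  have h1 : (Finset.univ.filter (fun i : Fin n => (i : ℕ) < k)) ∪
      (Finset.univ.filter (fun i : Fin n => ¬ (i : ℕ) < k)) = Finset.univ :=
    Finset.filter_union_filter_not_eq _ _
  have h2 : Disjoint (Finset.univ.filter (fun i : Fin n => (i : ℕ) < k))
      (Finset.univ.filter (fun i : Fin n => ¬ (i : ℕ) < k)) :=
    Finset.disjoint_filter_filter_not _ _ _
  have h3 := Finset.card_union_of_disjoint h2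
  rw [h1, Finset.card_univ, Fintype.card_fin, card_filter_lt n k hk] at h3
  omega
private lemma levelProbGe_eq (n k : ℕ) (hk : k ≤ n) :
    levelProbGe n k (k+1) =
      ∑ r ∈ ((Finset.univ.filter (fun i : Fin n => (i : ℕ) < k)).powerset ×ˢ
            (Finset.univ.filter (fun i : Fin n => ¬ (i : ℕ) < k)).powerset).filter
            (fun r => k + 1 ≤ r.1.card + r.2.card),
        ((1:ℝ)/n) ^ ((k - r.1.card) + r.2.card)
          * (1 - 1/n) ^ (n - ((k - r.1.card) + r.2.card)) := by
  classical
  set O := Finset.univ.filter (fun i : Fin n => (i : ℕ) < k) with hO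
  set Z := Finset.univ.filter (fun i : Fin n => ¬ (i : ℕ) < k) with hZ
  have hOZunion : O ∪ Z = Finset.univ := Finset.filter_union_filter_not_eq _ _
  have hOZdisj : Disjoint O Z := Finset.disjoint_filter_filter_not _ _ _
  have hcardO : O.card = k := card_filter_lt n k hk
  -- step 1 : single filtered sum
  have h1 : levelProbGe n k (k+1)
      = ∑ y ∈ Finset.univ.filter (fun y : Fin n → Bool => k + 1 ≤ onesCount n y),
          mutProb n (1/n) (fun i => decide ((i : ℕ) < k)) y := by
    rw [levelProbGe]
    unfold levelProb
    rw [Finset.sum_fiberwise_eq_sum_filter]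
    apply Finset.sum_congr _ (fun _ _ => rfl)
    apply Finset.filter_congr
    intro y _
    have : onesCount n y ≤ n := by
      simpa [onesCount] using (Finset.card_filter_le Finset.univ (fun i : Fin n => y i = true))
    simp [Finset.mem_Icc, this]
  rw [h1]
  -- facts about the correspondence
  have hsplit : ∀ y : Fin n → Bool,
      (O.filter (fun i => y i = true)).card + (Z.filter (fun i => y i = true)).card
        = onesCount n y := by
    intro y
    rw [onesCount, ← hOZunion, Finset.filter_union,
      Finset.card_union_of_disjoint (Finset.disjoint_filter_filter hOZdisj)]
  have hmemO : ∀ i : Fin n, i ∈ O ↔ (i : ℕ) < k := by intro i; simp [hO]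
  have hmemZ : ∀ i : Fin n, i ∈ Z ↔ ¬ (i : ℕ) < k := by intro i; simp [hZ]
  have hones : ∀ A B : Finset (Fin n), A ⊆ O → B ⊆ Z →
      onesCount n (fun i => decide (i ∈ A ∪ B)) = A.card + B.card := by
    intro A B hA hB
    rw [onesCount, ← Finset.card_union_of_disjoint (hOZdisj.mono hA hB)]
    congr 1
    ext i
    simp
  have hham : ∀ A B : Finset (Fin n), A ⊆ O → B ⊆ Z →
      hammingDist (fun i : Fin n => decide ((i : ℕ) < k)) (fun i => decide (i ∈ A ∪ B))
        = (k - A.card) + B.card := by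
    intro A B hA hB
    have hset : (Finset.univ.filter fun i : Fin n =>
        decide ((i : ℕ) < k) ≠ decide (i ∈ A ∪ B)) = (O \ A) ∪ B := by
      ext i
      simp only [Finset.mem_filter, Finset.mem_univ, true_and, ne_eq, decide_eq_decide,
        Finset.mem_union, Finset.mem_sdiff]
      by_cases hik : (i : ℕ) < k
      · have hiB : i ∉ B := fun h => ((hmemZ i).1 (hB h)) hik
        have hiO : i ∈ O := (hmemO i).2 hik
        tauto
      · have hiA : i ∉ A := fun h => hik ((hmemO i).1 (hA h))
        have hiO : i ∉ O := fun h => hik ((hmemO i).1 h)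
        tauto
    rw [hammingDist, hset, Finset.card_union_of_disjoint
        (hOZdisj.mono Finset.sdiff_subset hB),
      Finset.card_sdiff_of_subset hA, hcardO]
  -- the bijection
  refine Finset.sum_nbij'
    (i := fun y => (O.filter (fun i => y i = true), Z.filter (fun i => y i = true)))
    (j := fun r => fun i : Fin n => decide (i ∈ r.1 ∪ r.2)) ?_ ?_ ?_ ?_ ?_
  · intro y hy
    simp only [Finset.mem_filter, Finset.mem_univ, true_and] at hy
    simp only [Finset.mem_filter, Finset.mem_product, Finset.mem_powerset]
    exact ⟨⟨Finset.filter_subset _ _, Finset.filter_subset _ _⟩, by rw [hsplit]; exact hy⟩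
  · intro r hr
    simp only [Finset.mem_filter, Finset.mem_product, Finset.mem_powerset] at hr
    simp only [Finset.mem_filter, Finset.mem_univ, true_and]
    rw [hones r.1 r.2 hr.1.1 hr.1.2]
    exact hr.2
  · intro y _
    funext i
    have hOZ : i ∈ O ∨ i ∈ Z := by
      by_cases h : (i : ℕ) < k
      · exact Or.inl ((hmemO i).2 h)
      · exact Or.inr ((hmemZ i).2 h)
    by_cases hy : y i = true
    · simp [hy, hOZ]
    · simp [hy]
  · intro r hr
    simp only [Finset.mem_filter, Finset.mem_product, Finset.mem_powerset] at hr
    obtain ⟨⟨hA, hB⟩, -⟩ := hr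
    have e1 : O.filter (fun i => decide (i ∈ r.1 ∪ r.2) = true) = r.1 := by
      ext i
      simp only [Finset.mem_filter, decide_eq_true_eq, Finset.mem_union]
      constructor
      · rintro ⟨hiO, hi1 | hi2⟩
        · exact hi1
        · exact absurd ((hmemZ i).1 (hB hi2)) (not_not_intro ((hmemO i).1 hiO))
      · intro h; exact ⟨hA h, Or.inl h⟩
    have e2 : Z.filter (fun i => decide (i ∈ r.1 ∪ r.2) = true) = r.2 := by
      ext i
      simp only [Finset.mem_filter, decide_eq_true_eq, Finset.mem_union]
      constructor
      · rintro ⟨hiZ, hi1 | hi2⟩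
        · exact absurd ((hmemO i).1 (hA hi1)) ((hmemZ i).1 hiZ)
        · exact hi2
      · intro h; exact ⟨hB h, Or.inr h⟩
    exact Prod.ext e1 e2
  · intro y hy
    have hyj : y = fun i : Fin n => decide (i ∈ (O.filter (fun i => y i = true)) ∪ (Z.filter (fun i => y i = true))) := by
      funext i
      have hOZ : i ∈ O ∨ i ∈ Z := by
        by_cases h : (i : ℕ) < k
        · exact Or.inl ((hmemO i).2 h)
        · exact Or.inr ((hmemZ i).2 h)
      by_cases hyi : y i = true
      · simp [hyi, hOZ]
      · simp [hyi]
    rw [mutProb]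
    conv_lhs => rw [hyj]
    rw [hham _ _ (Finset.filter_subset _ _) (Finset.filter_subset _ _)]
private lemma sum_single_flip (n k : ℕ) (hk : k ≤ n) :
    ∑ r ∈ ({(Finset.univ.filter (fun i : Fin n => (i : ℕ) < k))} ×ˢ
          (Finset.univ.filter (fun i : Fin n => ¬ (i : ℕ) < k)).powersetCard 1),
        ((1:ℝ)/n) ^ ((k - r.1.card) + r.2.card)
          * (1 - 1/n) ^ (n - ((k - r.1.card) + r.2.card))
      = ((n - k : ℕ) : ℝ) * ((1:ℝ)/n) * (1 - 1/n) ^ (n - 1) := by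
  rw [Finset.sum_product, Finset.sum_singleton]
  have hterm : ∀ B ∈ (Finset.univ.filter (fun i : Fin n => ¬ (i : ℕ) < k)).powersetCard 1,
      ((1:ℝ)/n) ^ ((k - (Finset.univ.filter (fun i : Fin n => (i : ℕ) < k)).card) + B.card)
        * (1 - 1/n) ^ (n - ((k - (Finset.univ.filter (fun i : Fin n => (i : ℕ) < k)).card) + B.card))
      = ((1:ℝ)/n) * (1 - 1/n) ^ (n - 1) := by
    intro B hB
    rw [card_filter_lt n k hk, (Finset.mem_powersetCard.1 hB).2, Nat.sub_self]
    norm_num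
  rw [Finset.sum_congr rfl hterm, Finset.sum_const, Finset.card_powersetCard,
    card_filter_not_lt n k hk, Nat.choose_one_right, nsmul_eq_mul]
  ring
private lemma levelProbGe_ge (n k : ℕ) (hk : k < n) :
    ((n - k : ℕ) : ℝ) * ((1:ℝ)/n) * (1 - 1/n) ^ (n - 1) ≤ levelProbGe n k (k+1) := by
  classical
  have hn : 1 ≤ n := Nat.one_le_of_lt (Nat.lt_of_le_of_lt (Nat.zero_le k) hk)
  have hn1 : (1:ℝ) ≤ n := by exact_mod_cast hn
  have hp0 : (0:ℝ) ≤ 1/n := by positivity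
  have hq0 : (0:ℝ) ≤ 1 - 1/n := by
    have : 1/(n:ℝ) ≤ 1 := by
      rw [div_le_one (by linarith)]; linarith
    linarith
  rw [levelProbGe_eq n k hk.le, ← sum_single_flip n k hk.le]
  apply Finset.sum_le_sum_of_subset_of_nonneg
  · intro r hr
    simp only [Finset.mem_product, Finset.mem_singleton] at hr
    obtain ⟨h1, h2⟩ := hr
    rw [Finset.mem_powersetCard] at h2
    simp only [Finset.mem_filter, Finset.mem_product, Finset.mem_powerset]
    refine ⟨⟨by rw [h1], h2.1⟩, ?_⟩
    rw [h1, card_filter_lt n k hk.le, h2.2]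
  · intro r _ _
    positivity
private lemma choose_cast_le (m b : ℕ) (h2 : 2 ≤ b) (hbm : b ≤ m) :
    (m.choose b : ℝ) ≤ (m.choose 2 : ℝ) * ((m-2).choose (b-2) : ℝ) := by
  have h2m : 2 ≤ m := le_trans h2 hbm
  have key : (m.choose 2 : ℝ) * ((m-2).choose (b-2) : ℝ)
      = (m.choose b : ℝ) * (b.choose 2 : ℝ) := by
    rw [Nat.cast_choose ℝ h2m, Nat.cast_choose ℝ (show b-2 ≤ m-2 by omega),
        Nat.cast_choose ℝ hbm, Nat.cast_choose ℝ h2]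
    have e1 : m - 2 - (b - 2) = m - b := by omega
    rw [e1]
    have f0 : ∀ j : ℕ, ((Nat.factorial j : ℕ) : ℝ) ≠ 0 := fun j => Nat.cast_ne_zero.2 (Nat.factorial_ne_zero j)
    field_simp
  have hb2 : (1:ℝ) ≤ (b.choose 2 : ℝ) := by
    exact_mod_cast Nat.succ_le_of_lt (Nat.choose_pos h2)
  calc (m.choose b : ℝ) = (m.choose b : ℝ) * 1 := by ring
    _ ≤ (m.choose b : ℝ) * (b.choose 2 : ℝ) :=
        mul_le_mul_of_nonneg_left hb2 (Nat.cast_nonneg _)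
    _ = _ := key.symm
private lemma tail_sum_le (m : ℕ) (p q : ℝ) (hp : 0 ≤ p) (hq : 0 ≤ q) (hpq : p + q = 1) :
    ∑ b ∈ (Finset.range (m+1)).filter (fun b => 2 ≤ b), p^b * q^(m-b) * (m.choose b : ℝ)
      ≤ (m.choose 2 : ℝ) * p^2 := by
  rcases lt_or_ge m 2 with hm | hm
  · have hempty : (Finset.range (m+1)).filter (fun b => 2 ≤ b) = ∅ := by
      ext b; simp only [Finset.mem_filter, Finset.mem_range, Finset.notMem_empty, iff_false]
      omega
    rw [hempty, Finset.sum_empty]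
    positivity
  · have hstep : ∀ b ∈ (Finset.range (m+1)).filter (fun b => 2 ≤ b),
        p^b * q^(m-b) * (m.choose b : ℝ)
          ≤ (m.choose 2 : ℝ) * p^2 * (p^(b-2) * q^((m-2)-(b-2)) * ((m-2).choose (b-2) : ℝ)) := by
      intro b hb
      simp only [Finset.mem_filter, Finset.mem_range] at hb
      obtain ⟨hb1, hb2⟩ := hb
      have hbm : b ≤ m := by omega
      have e1 : p^b = p^2 * p^(b-2) := by
        rw [← pow_add]; congr 1; omega
      have e2 : (m-2)-(b-2) = m - b := by omega
      rw [e1, e2]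
      have := choose_cast_le m b hb2 hbm
      have hnn : (0:ℝ) ≤ p^2 * p^(b-2) * q^(m-b) := by positivity
      calc p ^ 2 * p ^ (b - 2) * q ^ (m - b) * (m.choose b : ℝ)
          ≤ p ^ 2 * p ^ (b - 2) * q ^ (m - b) * ((m.choose 2 : ℝ) * ((m-2).choose (b-2) : ℝ)) :=
            mul_le_mul_of_nonneg_left this hnn
        _ = (m.choose 2 : ℝ) * p^2 * (p^(b-2) * q^(m-b) * ((m-2).choose (b-2) : ℝ)) := by ring
    refine le_trans (Finset.sum_le_sum hstep) ?_
    rw [← Finset.mul_sum]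
    have hsum : ∑ b ∈ (Finset.range (m+1)).filter (fun b => 2 ≤ b),
        p^(b-2) * q^((m-2)-(b-2)) * ((m-2).choose (b-2) : ℝ)
        = ∑ c ∈ Finset.range ((m-2)+1), p^c * q^((m-2)-c) * ((m-2).choose c : ℝ) := by
      apply Finset.sum_nbij' (i := fun b => b - 2) (j := fun c => c + 2)
      · intro b hb; simp only [Finset.mem_filter, Finset.mem_range] at hb ⊢; omega
      · intro c hc; simp only [Finset.mem_filter, Finset.mem_range] at hc ⊢; omega
      · intro b hb; simp only [Finset.mem_filter, Finset.mem_range] at hb; omega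
      · intro c _; omega
      · intro b _; rfl
    rw [hsum, ← add_pow p q (m-2), hpq, one_pow, mul_one]
private lemma sum_powerset_eq_one {α : Type*} [DecidableEq α] (s : Finset α) (p q : ℝ)
    (hpq : p + q = 1) :
    ∑ A ∈ s.powerset, q ^ A.card * p ^ (s.card - A.card) = 1 := by
  rw [Finset.sum_powerset]
  have h : ∀ j ∈ Finset.range (s.card+1),
      ∑ A ∈ s.powersetCard j, q ^ A.card * p ^ (s.card - A.card)
        = q^j * p^(s.card - j) * (s.card.choose j : ℝ) := by
    intro j _
    rw [Finset.sum_congr rfl (fun A hA => by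
      rw [(Finset.mem_powersetCard.1 hA).2]), Finset.sum_const, Finset.card_powersetCard,
      nsmul_eq_mul]
    ring
  rw [Finset.sum_congr rfl h, ← add_pow q p s.card]
  rw [show q + p = 1 by linarith, one_pow]
private lemma sum_powerset_tail_le {α : Type*} [DecidableEq α] (s : Finset α) (p q : ℝ)
    (hp : 0 ≤ p) (hq : 0 ≤ q) (hpq : p + q = 1) :
    ∑ B ∈ s.powerset.filter (fun B => 2 ≤ B.card), p ^ B.card * q ^ (s.card - B.card)
      ≤ (s.card.choose 2 : ℝ) * p^2 := by
  have hfib := Finset.sum_fiberwise_eq_sum_filter s.powerset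
      ((Finset.range (s.card+1)).filter (fun b => 2 ≤ b)) Finset.card
      (fun B => p ^ B.card * q ^ (s.card - B.card))
  have hset : s.powerset.filter
      (fun B => B.card ∈ (Finset.range (s.card+1)).filter (fun b => 2 ≤ b))
      = s.powerset.filter (fun B => 2 ≤ B.card) := by
    apply Finset.filter_congr
    intro B hB
    have := Finset.card_le_card (Finset.mem_powerset.1 hB)
    simp only [Finset.mem_filter, Finset.mem_range]
    constructor
    · rintro ⟨-, h⟩; exact h
    · intro h; exact ⟨by omega, h⟩
  rw [hset] at hfib
  rw [← hfib]
  have hinner : ∀ b ∈ (Finset.range (s.card+1)).filter (fun b => 2 ≤ b),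
      ∑ B ∈ s.powerset.filter (fun B => B.card = b), p ^ B.card * q ^ (s.card - B.card)
        = p^b * q^(s.card - b) * (s.card.choose b : ℝ) := by
    intro b _
    rw [← Finset.powersetCard_eq_filter]
    rw [Finset.sum_congr rfl (fun B hB => by rw [(Finset.mem_powersetCard.1 hB).2]),
      Finset.sum_const, Finset.card_powersetCard, nsmul_eq_mul]
    ring
  rw [Finset.sum_congr rfl hinner]
  exact tail_sum_le s.card p q hp hq hpq
private lemma levelProbGe_le (n k : ℕ) (hk : k < n) :
    levelProbGe n k (k+1)
      ≤ ((n - k : ℕ) : ℝ) * ((1:ℝ)/n) * (1 - 1/n) ^ (n - 1)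
        + ((n - k : ℕ) : ℝ)^2 / 2 * ((1:ℝ)/n)^2 := by
  classical
  have hn : 1 ≤ n := Nat.one_le_of_lt (Nat.lt_of_le_of_lt (Nat.zero_le k) hk)
  have hn1 : (1:ℝ) ≤ n := by exact_mod_cast hn
  have hp0 : (0:ℝ) ≤ 1/n := by positivity
  have hq0 : (0:ℝ) ≤ 1 - 1/n := by
    have : 1/(n:ℝ) ≤ 1 := by rw [div_le_one (by linarith)]; linarith
    linarith
  have hpq : (1:ℝ)/n + (1 - 1/n) = 1 := by ring
  set O := Finset.univ.filter (fun i : Fin n => (i : ℕ) < k) with hO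
  set Z := Finset.univ.filter (fun i : Fin n => ¬ (i : ℕ) < k) with hZ
  have hcardO : O.card = k := card_filter_lt n k hk.le
  have hcardZ : Z.card = n - k := card_filter_not_lt n k hk.le
  rw [levelProbGe_eq n k hk.le]
  set f : Finset (Fin n) × Finset (Fin n) → ℝ := fun r =>
    ((1:ℝ)/n) ^ ((k - r.1.card) + r.2.card)
      * (1 - 1/n) ^ (n - ((k - r.1.card) + r.2.card)) with hf
  set s := ((O.powerset ×ˢ Z.powerset).filter (fun r => k + 1 ≤ r.1.card + r.2.card)) with hs
  rw [← Finset.sum_filter_add_sum_filter_not s (fun r => r.2.card ≤ 1) f]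
  have hfnonneg : ∀ r, 0 ≤ f r := by intro r; rw [hf]; positivity
  -- first part
  have hpart1 : s.filter (fun r => r.2.card ≤ 1) = {O} ×ˢ Z.powersetCard 1 := by
    ext r
    simp only [hs, Finset.mem_filter, Finset.mem_product, Finset.mem_powerset,
      Finset.mem_singleton, Finset.mem_powersetCard]
    constructor
    · rintro ⟨⟨⟨hA, hB⟩, hC⟩, h1⟩
      have hAk : r.1.card ≤ k := hcardO ▸ Finset.card_le_card hA
      have hB1 : r.2.card = 1 := by omega
      have hAO : r.1 = O := Finset.eq_of_subset_of_card_le hA (by omega)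
      exact ⟨hAO, hB, hB1⟩
    · rintro ⟨hAO, hB, hB1⟩
      exact ⟨⟨⟨by rw [hAO], hB⟩, by rw [hAO, hcardO, hB1]⟩, by omega⟩
  have hsum1 : ∑ r ∈ s.filter (fun r => r.2.card ≤ 1), f r
      = ((n - k : ℕ) : ℝ) * ((1:ℝ)/n) * (1 - 1/n) ^ (n - 1) := by
    rw [hpart1]
    exact sum_single_flip n k hk.le
  -- second part
  have hpart2 : ∑ r ∈ s.filter (fun r => ¬ r.2.card ≤ 1), f r
      ≤ ((n - k : ℕ) : ℝ)^2 / 2 * ((1:ℝ)/n)^2 := by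
    have hsub : s.filter (fun r => ¬ r.2.card ≤ 1)
        ⊆ O.powerset ×ˢ (Z.powerset.filter (fun B => 2 ≤ B.card)) := by
      intro r hr
      simp only [hs, Finset.mem_filter, Finset.mem_product, Finset.mem_powerset] at hr ⊢
      exact ⟨hr.1.1.1, hr.1.1.2, by omega⟩
    refine le_trans (Finset.sum_le_sum_of_subset_of_nonneg hsub (fun r _ _ => hfnonneg r)) ?_
    have hfact : ∀ r : Finset (Fin n) × Finset (Fin n),
        r ∈ O.powerset ×ˢ (Z.powerset.filter (fun B => 2 ≤ B.card)) →
        f r = ((1 - 1/n) ^ r.1.card * ((1:ℝ)/n) ^ (k - r.1.card))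
            * (((1:ℝ)/n) ^ r.2.card * (1 - 1/n) ^ ((n - k) - r.2.card)) := by
      intro r hr
      simp only [Finset.mem_product, Finset.mem_powerset, Finset.mem_filter] at hr
      have hAk : r.1.card ≤ k := hcardO ▸ Finset.card_le_card hr.1
      have hBm : r.2.card ≤ n - k := hcardZ ▸ Finset.card_le_card hr.2.1
      simp only [hf]
      have e1 : ((1:ℝ)/n) ^ ((k - r.1.card) + r.2.card)
          = ((1:ℝ)/n) ^ (k - r.1.card) * ((1:ℝ)/n) ^ r.2.card := pow_add _ _ _
      have e2 : n - ((k - r.1.card) + r.2.card) = r.1.card + ((n - k) - r.2.card) := by omega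
      rw [e1, e2, pow_add]
      ring
    rw [Finset.sum_congr rfl hfact, Finset.sum_product]
    simp only
    rw [← Finset.sum_mul_sum]
    have hA1 : ∑ A ∈ O.powerset, (1 - 1/(n:ℝ)) ^ A.card * ((1:ℝ)/n) ^ (k - A.card) = 1 := by
      have := sum_powerset_eq_one O ((1:ℝ)/n) (1 - 1/n) hpq
      rw [hcardO] at this
      exact this
    rw [hA1, one_mul]
    have hB1 : ∑ B ∈ Z.powerset.filter (fun B => 2 ≤ B.card),
        ((1:ℝ)/n) ^ B.card * (1 - 1/n) ^ ((n - k) - B.card)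
          ≤ ((n-k).choose 2 : ℝ) * ((1:ℝ)/n)^2 := by
      have := sum_powerset_tail_le Z ((1:ℝ)/n) (1 - 1/n) hp0 hq0 hpq
      rw [hcardZ] at this
      exact this
    refine le_trans hB1 ?_
    have hch : ((n-k).choose 2 : ℝ) ≤ ((n - k : ℕ) : ℝ)^2 / 2 := by
      rw [Nat.cast_choose_two]
      have hnk0 : (0:ℝ) ≤ ((n - k : ℕ) : ℝ) := Nat.cast_nonneg _
      nlinarith
    have : (0:ℝ) ≤ ((1:ℝ)/n)^2 := by positivity
    nlinarith
  linarith
private lemma per_term (n i : ℕ) (hn : 2 ≤ n) (hi : i < n) :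
    (((1 - 1/(n:ℝ))^(n-1))⁻¹ * n * (1/((n:ℝ) - i))
        - (1/2) * (((1 - 1/(n:ℝ))^(n-1))⁻¹)^2 ≤ 1 / levelProbGe n i (i+1)) ∧
    1 / levelProbGe n i (i+1) ≤ ((1 - 1/(n:ℝ))^(n-1))⁻¹ * n * (1/((n:ℝ) - i)) := by
  have hN : (2:ℝ) ≤ n := by exact_mod_cast hn
  have hN0 : (0:ℝ) < n := by linarith
  have hq : (0:ℝ) < 1 - 1/n := by
    rw [sub_pos, div_lt_one hN0]; linarith
  have hqq : (0:ℝ) < (1 - 1/(n:ℝ))^(n-1) := pow_pos hq _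
  have hcast : ((n - i : ℕ):ℝ) = (n:ℝ) - i := by
    rw [Nat.cast_sub hi.le]
  have ha : (0:ℝ) < (n:ℝ) - i := by
    have : (i:ℝ) < n := by exact_mod_cast hi
    linarith
  have hlow := levelProbGe_ge n i hi
  have hup := levelProbGe_le n i hi
  rw [hcast] at hlow hup
  set a : ℝ := (n:ℝ) - i with hadef
  set qq : ℝ := (1 - 1/(n:ℝ))^(n-1) with hqqdef
  set P : ℝ := levelProbGe n i (i+1) with hPdef
  set X : ℝ := a * (1/n) * qq with hXdef
  set D : ℝ := a^2 / 2 * ((1:ℝ)/n)^2 with hDdef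
  have hX0 : (0:ℝ) < X := by rw [hXdef]; positivity
  have hP0 : (0:ℝ) < P := lt_of_lt_of_le hX0 hlow
  have hD0 : (0:ℝ) < D := by rw [hDdef]; positivity
  have s3 : qq⁻¹ * n * (1/a) = 1/X := by
    rw [hXdef]; field_simp
  constructor
  · have s1 : 1/(X + D) ≤ 1/P := one_div_le_one_div_of_le hP0 hup
    have s2 : 1/X - 1/(X + D) ≤ (1/2) * (qq⁻¹)^2 := by
      have e1 : 1/X - 1/(X + D) = D / (X * (X + D)) := by
        field_simp
        ring
      have e2 : D / (X * (X + D)) ≤ D / (X * X) := by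
        apply div_le_div_of_nonneg_left hD0.le (by positivity)
        nlinarith
      have e3 : D / (X * X) = (1/2) * (qq⁻¹)^2 := by
        rw [hDdef, hXdef]
        field_simp
      linarith
    linarith
  · have s1 : 1/P ≤ 1/X := one_div_le_one_div_of_le hX0 hlow
    linarith [s3 ▸ s1]

/-- For `n ≥ 2` and `k < ℓ ≤ n`, with `p_i = p_{i,≥i+1}`,
`T̃_{k,ℓ} = ∑_{i=k}^{ℓ-1} 1/p_i`, `e_n = (1-1/n)^{-(n-1)}` and
`T̃⁺_{k,ℓ} = e_n·n·∑_{i=k}^{ℓ-1} 1/(n-i)`, we have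
`T̃⁺_{k,ℓ} - (1/2)·e_n²·(ℓ-k) ≤ T̃_{k,ℓ} ≤ T̃⁺_{k,ℓ}`. -/
theorem fitness_level_estimate_bounds
    (n k l : ℕ) (hn : 2 ≤ n) (hkl : k < l) (hl : l ≤ n) :
    ((1 - 1 / (n : ℝ)) ^ (n - 1))⁻¹ * n * (∑ i ∈ Finset.Ico k l, 1 / ((n : ℝ) - i))
        - (1 / 2) * (((1 - 1 / (n : ℝ)) ^ (n - 1))⁻¹) ^ 2 * ((l : ℝ) - k)
      ≤ ∑ i ∈ Finset.Ico k l, 1 / levelProbGe n i (i + 1) ∧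
    ∑ i ∈ Finset.Ico k l, 1 / levelProbGe n i (i + 1)
      ≤ ((1 - 1 / (n : ℝ)) ^ (n - 1))⁻¹ * n * (∑ i ∈ Finset.Ico k l, 1 / ((n : ℝ) - i)) := by
  have hmem : ∀ i ∈ Finset.Ico k l, i < n := by
    intro i hi
    exact lt_of_lt_of_le (Finset.mem_Ico.1 hi).2 hl
  constructor
  · have h1 : ∀ i ∈ Finset.Ico k l,
        ((1 - 1/(n:ℝ))^(n-1))⁻¹ * n * (1/((n:ℝ) - i))
          - (1/2) * (((1 - 1/(n:ℝ))^(n-1))⁻¹)^2 ≤ 1 / levelProbGe n i (i+1) :=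
      fun i hi => (per_term n i hn (hmem i hi)).1
    refine le_trans (le_of_eq ?_) (Finset.sum_le_sum h1)
    rw [Finset.sum_sub_distrib, ← Finset.mul_sum, Finset.sum_const, Nat.card_Ico,
      nsmul_eq_mul]
    have : ((l - k : ℕ) : ℝ) = (l:ℝ) - k := by
      rw [Nat.cast_sub hkl.le]
    rw [this]
    ring
  · have h1 : ∀ i ∈ Finset.Ico k l,
        1 / levelProbGe n i (i+1) ≤ ((1 - 1/(n:ℝ))^(n-1))⁻¹ * n * (1/((n:ℝ) - i)) :=
      fun i hi => (per_term n i hn (hmem i hi)).2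
    refine le_trans (Finset.sum_le_sum h1) (le_of_eq ?_)
    rw [← Finset.mul_sum]
end

section
/- Let n ∈ ℕ, k ∈ [2..n], and j ∈ [1..k−1]. Let x ∈ {0,1}^n with Jump_{n,k}(x) = j (so x lies in the gap region), and let y be obtained from x by standard bit mutation with rate 1/n. Then Pr[y = (1,…,1) | Jump_{n,k}(y) > j] ≤ e / (n^{j−1} (n−j)). -/
open MeasureTheory Finset
open scoped ENNReal

/-- The jump function `Jump_{n,k}`: `‖x‖₁ + k` if `‖x‖₁ ∈ [0..n-k] ∪ {n}`, and
`n - ‖x‖₁` if `‖x‖₁ ∈ [n-k+1..n-1]`. -/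
noncomputable def jumpF (n k : ℕ) (x : Fin n → Bool) : ℝ :=
  if onesCount n x ≤ n - k ∨ onesCount n x = n then (onesCount n x : ℝ) + k
  else (n : ℝ) - onesCount n x

lemma ham_allones (n : ℕ) (x : Fin n → Bool) :
    hammingDist x (fun _ => true) = n - onesCount n x := by
  have h := Finset.card_filter_add_card_filter_not
      (s := (Finset.univ : Finset (Fin n))) (p := fun i => x i = true)
  simp only [Finset.card_univ, Fintype.card_fin] at h
  rw [hammingDist, onesCount]
  have : ({i | x i ≠ (fun _ => true) i} : Finset (Fin n))
      = Finset.univ.filter fun i => ¬ (x i = true) := by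
    ext i; simp
  rw [this]; omega

lemma ham_update (n : ℕ) (x : Fin n → Bool) (i : Fin n) (hx : x i = true) :
    hammingDist x (Function.update x i false) = 1 := by
  rw [hammingDist]
  have : ({j | x j ≠ Function.update x i false j} : Finset (Fin n)) = {i} := by
    ext j
    simp only [Finset.mem_filter, Finset.mem_univ, true_and, Finset.mem_singleton]
    constructor
    · intro h
      by_contra hj
      exact h (by rw [Function.update_of_ne hj])
    · rintro rfl
      rw [Function.update_self, hx]; simp
  rw [this, Finset.card_singleton]

lemma ones_update (n : ℕ) (x : Fin n → Bool) (i : Fin n) (hx : x i = true) :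
    onesCount n (Function.update x i false) = onesCount n x - 1 := by
  rw [onesCount, onesCount]
  have : (Finset.univ.filter fun j => Function.update x i false j = true)
      = (Finset.univ.filter fun j => x j = true).erase i := by
    ext j
    simp only [Finset.mem_filter, Finset.mem_univ, true_and, Finset.mem_erase]
    by_cases hj : j = i
    · subst hj; simp [Function.update_self]
    · rw [Function.update_of_ne hj]; tauto
  rw [this, Finset.card_erase_of_mem]
  simp [hx]

/-- Let `k ∈ [2..n]` and `j ∈ [1..k-1]`. Let `x ∈ {0,1}^n` lie in the
gap region with `Jump_{n,k}(x) = j`, and let `y` be obtained from `x` by standard bit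
mutation with rate `1/n`. Then `Pr[y = (1,…,1) | Jump_{n,k}(y) > j] ≤ e/(n^{j-1}(n-j))`.
(Note the offspring `(1,…,1)` has jump value `n + k > j`, so the conditional
probability is the ratio below.) -/
theorem jump_conditional_optimum_probability
    (n k j : ℕ) (hk2 : 2 ≤ k) (hkn : k ≤ n) (hj1 : 1 ≤ j) (hjk : j ≤ k - 1)
    (x : Fin n → Bool)
    (hgap : n - k < onesCount n x ∧ onesCount n x < n)
    (hjval : jumpF n k x = j) :
    mutProb n (1 / n) x (fun _ => true)
        / (∑ y ∈ Finset.univ.filter (fun y : Fin n → Bool => (j : ℝ) < jumpF n k y),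
            mutProb n (1 / n) x y)
      ≤ Real.exp 1 / ((n : ℝ) ^ (j - 1) * ((n : ℝ) - j)) := by
  have hn2 : 2 ≤ n := hk2.trans hkn
  have hjn : j + 1 ≤ n := by omega
  have hnR : (2 : ℝ) ≤ (n : ℝ) := by exact_mod_cast hn2
  have hn0 : (0 : ℝ) < n := by linarith
  set p : ℝ := 1 / n with hp
  have hp0 : 0 < p := by positivity
  have hp1 : p < 1 := by rw [hp]; rw [div_lt_one hn0]; linarith
  have h1p : 0 < 1 - p := by linarith
  -- onesCount x = n - j
  have hnotif : ¬ (onesCount n x ≤ n - k ∨ onesCount n x = n) := by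
    push_neg; exact ⟨by omega, by omega⟩
  rw [jumpF, if_neg hnotif] at hjval
  have hones : onesCount n x = n - j := by
    have h2 : ((onesCount n x : ℝ)) = ((n - j : ℕ) : ℝ) := by
      rw [Nat.cast_sub (by omega)]; linarith
    exact_mod_cast h2
  have hmut_nonneg : ∀ y, 0 ≤ mutProb n p x y := fun y =>
    mul_nonneg (pow_nonneg hp0.le _) (pow_nonneg h1p.le _)
  -- injectivity of the flip map on one-bits
  have hinj : ∀ i ∈ Finset.univ.filter (fun i : Fin n => x i = true),
      ∀ i' ∈ Finset.univ.filter (fun i : Fin n => x i = true),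
      Function.update x i false = Function.update x i' false → i = i' := by
    intro i hi i' hi' h
    simp only [Finset.mem_filter, Finset.mem_univ, true_and] at hi hi'
    by_contra hne
    have := congrFun h i
    rw [Function.update_self, Function.update_of_ne hne, hi] at this
    exact Bool.false_ne_true this
  set S := (Finset.univ.filter fun i : Fin n => x i = true).image
      (fun i => Function.update x i false) with hS
  have hSsub : S ⊆ Finset.univ.filter (fun y => (j : ℝ) < jumpF n k y) := by
    intro y hy
    simp only [hS, Finset.mem_image, Finset.mem_filter, Finset.mem_univ, true_and] at hy ⊢
    obtain ⟨i, hxi, rfl⟩ := hy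
    have hoy : onesCount n (Function.update x i false) = n - j - 1 := by
      rw [ones_update n x i hxi, hones]
    rw [jumpF, hoy]
    have hcast : ((n - j - 1 : ℕ) : ℝ) = (n : ℝ) - j - 1 := by
      rw [show n - j - 1 = n - (j + 1) from rfl, Nat.cast_sub hjn]; push_cast; ring
    split_ifs with h
    · have hjkR : (j : ℝ) < k := by exact_mod_cast (by omega : j < k)
      have : (0 : ℝ) ≤ ((n - j - 1 : ℕ) : ℝ) := Nat.cast_nonneg _
      linarith
    · rw [hcast]
      have : (j : ℝ) ≤ (n : ℝ) - 1 := by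
        have : (j : ℝ) + 1 ≤ n := by exact_mod_cast hjn
        linarith
      linarith
  have hsum_S : ∑ y ∈ S, mutProb n p x y = ((n - j : ℕ) : ℝ) * (p * (1 - p) ^ (n - 1)) := by
    rw [hS, Finset.sum_image hinj]
    rw [Finset.sum_congr rfl (fun i hi => ?_), Finset.sum_const, ← onesCount, hones,
      nsmul_eq_mul]
    simp only [Finset.mem_filter, Finset.mem_univ, true_and] at hi
    rw [mutProb, ham_update n x i hi, pow_one]
  have hc_pos : 0 < ((n - j : ℕ) : ℝ) * (p * (1 - p) ^ (n - 1)) := by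
    have : 0 < n - j := by omega
    have : (0 : ℝ) < ((n - j : ℕ) : ℝ) := by exact_mod_cast this
    positivity
  have hD_ge : ((n - j : ℕ) : ℝ) * (p * (1 - p) ^ (n - 1))
      ≤ ∑ y ∈ Finset.univ.filter (fun y : Fin n → Bool => (j : ℝ) < jumpF n k y),
          mutProb n p x y := by
    rw [← hsum_S]
    exact Finset.sum_le_sum_of_subset_of_nonneg hSsub (fun y _ _ => hmut_nonneg y)
  have hnum : mutProb n p x (fun _ => true) = p ^ j * (1 - p) ^ (n - j) := by
    rw [mutProb, ham_allones, hones]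
    rw [show n - (n - j) = j from by omega]
  have hcastnj : ((n - j : ℕ) : ℝ) = (n : ℝ) - j := by
    rw [Nat.cast_sub (by omega)]
  have hnj0 : (0 : ℝ) < (n : ℝ) - j := by
    have : (j : ℝ) + 1 ≤ n := by exact_mod_cast hjn
    linarith
  -- key: (n/(n-1))^(j-1) ≤ e
  have hn1 : (0 : ℝ) < (n : ℝ) - 1 := by linarith
  have hkey : (1 : ℝ) ≤ Real.exp 1 * (1 - p) ^ (j - 1) := by
    have h1pe : (1 - p) = ((n : ℝ) - 1) / n := by rw [hp]; field_simp
    have hbase : (n : ℝ) / ((n : ℝ) - 1) = 1 + 1 / ((n : ℝ) - 1) := by field_simp; ring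
    have hble : (n : ℝ) / ((n : ℝ) - 1) ≤ Real.exp (1 / ((n : ℝ) - 1)) := by
      rw [hbase]
      have := Real.add_one_le_exp (1 / ((n : ℝ) - 1))
      linarith
    have hpow : ((n : ℝ) / ((n : ℝ) - 1)) ^ (j - 1) ≤ Real.exp 1 := by
      calc ((n : ℝ) / ((n : ℝ) - 1)) ^ (j - 1)
          ≤ Real.exp (1 / ((n : ℝ) - 1)) ^ (j - 1) := by
            apply pow_le_pow_left₀ (by positivity) hble
        _ ≤ Real.exp (1 / ((n : ℝ) - 1)) ^ (n - 1) := by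
            apply pow_le_pow_right₀ (Real.one_le_exp (by positivity)) (by omega)
        _ = Real.exp 1 := by
            rw [← Real.exp_nat_mul]
            congr 1
            rw [Nat.cast_sub (by omega)]
            push_cast
            field_simp
    have hmul : ((n : ℝ) / ((n : ℝ) - 1)) ^ (j - 1) * (1 - p) ^ (j - 1) = 1 := by
      rw [← mul_pow, h1pe]
      rw [div_mul_div_comm]
      rw [mul_comm ((n:ℝ)) _]
      rw [div_self (by positivity), one_pow]
    calc (1 : ℝ) = ((n : ℝ) / ((n : ℝ) - 1)) ^ (j - 1) * (1 - p) ^ (j - 1) := hmul.symm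
      _ ≤ Real.exp 1 * (1 - p) ^ (j - 1) := by
          apply mul_le_mul_of_nonneg_right hpow (by positivity)
  -- assemble
  calc mutProb n p x (fun _ => true)
        / (∑ y ∈ Finset.univ.filter (fun y : Fin n → Bool => (j : ℝ) < jumpF n k y),
            mutProb n p x y)
      ≤ (p ^ j * (1 - p) ^ (n - j)) / (((n - j : ℕ) : ℝ) * (p * (1 - p) ^ (n - 1))) := by
        rw [hnum]
        apply div_le_div_of_nonneg_left (by positivity) hc_pos hD_ge
    _ ≤ Real.exp 1 / ((n : ℝ) ^ (j - 1) * ((n : ℝ) - j)) := by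
        rw [hcastnj, div_le_div_iff₀ (by positivity) (by positivity)]
        have hsplit : (1 - p) ^ (n - 1) = (1 - p) ^ (n - j) * (1 - p) ^ (j - 1) := by
          rw [← pow_add]
          congr 1
          omega
        have hkey1 : p ^ j * (n : ℝ) ^ (j - 1) = p := by
          rw [hp, div_pow, one_pow, show j = (j - 1) + 1 from by omega, pow_succ]
          field_simp
          rw [Nat.add_sub_cancel]
        rw [hsplit]
        have expand : Real.exp 1 * (((n:ℝ) - j) * (p * ((1 - p) ^ (n - j) * (1 - p) ^ (j - 1))))
            = (Real.exp 1 * (1 - p) ^ (j - 1)) * (((n:ℝ) - j) * p * (1 - p) ^ (n - j)) := by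
          ring
        rw [expand]
        calc p ^ j * (1 - p) ^ (n - j) * ((n : ℝ) ^ (j - 1) * ((n : ℝ) - j))
            = (p ^ j * (n : ℝ) ^ (j - 1)) * (((n:ℝ) - j) * (1 - p) ^ (n - j)) := by ring
          _ = 1 * (((n:ℝ) - j) * p * (1 - p) ^ (n - j)) := by rw [hkey1]; ring
          _ ≤ (Real.exp 1 * (1 - p) ^ (j - 1)) * (((n:ℝ) - j) * p * (1 - p) ^ (n - j)) := by
              apply mul_le_mul_of_nonneg_right hkey (by positivity)
end

section
/- There is an absolute constant C such that the following holds for all n ∈ ℕ and k ∈ [2..n]. Consider the (1+1) EA with mutation rate 1/n maximizing Jump_{n,k}, and let N := {x ∈ {0,1}^n : ‖x‖₁ ∈ [0..n−k]} and p_k := (1−1/n)^{n−k} n^{−k}. (1) If the algorithm starts with an arbitrary search point different from (1,…,1), then with probability at least 1 − C/n it at some time has a current search point in N, and consequently its expected run time is at least (1 − C/n) · p_k^{−1}. (2) If the algorithm starts with a uniformly random search point, then with probability at least 1 − C·2^{−n} it at some time has a current search point in N, and consequently its expected run time is at least (1 − C·2^{−n}) · p_k^{−1}. -/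
open MeasureTheory Finset
open scoped ENNReal

set_option linter.unusedSectionVars false

namespace JumpLB
def optP (n : ℕ) : Fin n → Bool := fun _ => true
lemma onesCount_le (n : ℕ) (x : Fin n → Bool) : onesCount n x ≤ n := by
  classical
  simpa [onesCount] using (Finset.card_filter_le Finset.univ (fun i : Fin n => x i = true))
lemma onesCount_eq_n_iff (n : ℕ) (x : Fin n → Bool) : onesCount n x = n ↔ x = optP n := by
  classical
  constructor
  · intro h
    have : (Finset.univ.filter fun i : Fin n => x i = true) = Finset.univ := by
      apply Finset.eq_univ_of_card
      simpa [Fintype.card_fin, onesCount] using h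
    funext i
    have := Finset.mem_filter.mp (this ▸ Finset.mem_univ i)
    simpa [optP] using this.2
  · rintro rfl
    simp [onesCount, optP]

/-- equivalence between bit strings and the set of flipped positions rel. to `x` -/
def flipEquiv {n : ℕ} (x : Fin n → Bool) : (Fin n → Bool) ≃ Finset (Fin n) where
  toFun y := Finset.univ.filter fun i => x i ≠ y i
  invFun s := fun i => if i ∈ s then !(x i) else x i
  left_inv y := by
    funext i
    by_cases h : x i = y i
    · simp [h]
    · simp only [Finset.mem_filter, Finset.mem_univ, true_and, h, if_pos, not_false_iff]
      cases hx : x i <;> cases hy : y i <;> simp_all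
  right_inv s := by
    ext i
    by_cases h : i ∈ s
    · simp [h]
    · simp [h]

lemma hammingDist_eq_card_flip {n : ℕ} (x y : Fin n → Bool) :
    hammingDist x y = (flipEquiv x y).card := rfl

lemma sum_mutProb {n : ℕ} (p : ℝ) (x : Fin n → Bool) :
    ∑ y, mutProb n p x y = 1 := by
  classical
  have h1 : ∑ y, mutProb n p x y
      = ∑ s : Finset (Fin n), p ^ s.card * (1 - p) ^ (n - s.card) := by
    rw [← Equiv.sum_comp (flipEquiv x) (fun s => p ^ s.card * (1 - p) ^ (n - s.card))]
    rfl
  have h2 := Finset.prod_add (fun _ : Fin n => p) (fun _ : Fin n => 1 - p) Finset.univ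
  simp only [Finset.prod_const, Finset.card_univ, Fintype.card_fin,
    Finset.powerset_univ, Finset.card_univ_diff] at h2
  rw [h1, ← h2]
  norm_num


lemma hammingDist_opt {n : ℕ} (x : Fin n → Bool) :
    hammingDist x (optP n) = n - onesCount n x := by
  classical
  have h := Finset.card_filter_add_card_filter_not
    (s := (Finset.univ : Finset (Fin n))) (p := fun i => x i = true)
  simp only [Finset.card_univ, Fintype.card_fin] at h
  have hh : hammingDist x (optP n)
      = (Finset.univ.filter fun i : Fin n => ¬(x i = true)).card := by
    unfold hammingDist optP
    congr 1
  rw [hh, onesCount] at *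
  omega

lemma update_ne {n : ℕ} {x : Fin n → Bool} {i : Fin n} (hx : x i = true) :
    Function.update x i false ≠ x := by
  intro h
  have := congrFun h i
  rw [Function.update_self] at this
  rw [hx] at this
  exact Bool.false_ne_true this

lemma onesCount_update {n : ℕ} {x : Fin n → Bool} {i : Fin n} (hx : x i = true) :
    onesCount n (Function.update x i false) = onesCount n x - 1 := by
  classical
  have h : (Finset.univ.filter fun j : Fin n => Function.update x i false j = true)
      = (Finset.univ.filter fun j : Fin n => x j = true).erase i := by
    ext j
    simp only [Finset.mem_filter, Finset.mem_univ, true_and, Finset.mem_erase]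
    by_cases hj : j = i
    · subst hj; simp
    · rw [Function.update_of_ne hj]; tauto
  rw [onesCount, h, Finset.card_erase_of_mem]
  · rfl
  · simp [hx]

lemma hammingDist_update {n : ℕ} {x : Fin n → Bool} {i : Fin n} :
    hammingDist x (Function.update x i false) = if x i = true then 1 else 0 := by
  classical
  unfold hammingDist
  by_cases hx : x i = true
  · rw [if_pos hx]
    have : (Finset.univ.filter fun j : Fin n => x j ≠ Function.update x i false j) = {i} := by
      ext j
      simp only [Finset.mem_filter, Finset.mem_univ, true_and, Finset.mem_singleton]
      by_cases hj : j = i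
      · subst hj; simp [hx]
      · rw [Function.update_of_ne hj]; simp [hj]
    rw [this, Finset.card_singleton]
  · rw [if_neg hx]
    have : (Finset.univ.filter fun j : Fin n => x j ≠ Function.update x i false j) = ∅ := by
      ext j
      simp only [Finset.mem_filter, Finset.mem_univ, true_and, Finset.notMem_empty, iff_false]
      by_cases hj : j = i
      · subst hj
        simp only [Function.update_self]
        simp only [Bool.not_eq_true] at hx
        simp [hx]
      · rw [Function.update_of_ne hj]; simp
    rw [this]; rfl


section Jump
variable {n k : ℕ} (hk2 : 2 ≤ k) (hkn : k ≤ n)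

lemma jump_opt : jumpF n k (optP n) = n + k := by
  have h := onesCount_eq_n_iff n (optP n)
  simp only [jumpF, h.mpr rfl]
  simp [h.mpr rfl]

lemma jump_N {x : Fin n → Bool} (h : onesCount n x ≤ n - k) :
    jumpF n k x = onesCount n x + k := if_pos (Or.inl h)

lemma jump_gap {x : Fin n → Bool} (h1 : n - k < onesCount n x) (h2 : onesCount n x < n) :
    jumpF n k x = (n : ℝ) - onesCount n x := by
  apply if_neg; push_neg; omega

include hk2 hkn in
lemma jump_lt_opt {x : Fin n → Bool} (hx : x ≠ optP n) :
    jumpF n k x < jumpF n k (optP n) := by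
  rw [jump_opt]
  have hxn : onesCount n x < n :=
    lt_of_le_of_ne (onesCount_le n x) (fun h => hx ((onesCount_eq_n_iff n x).mp h))
  by_cases h : onesCount n x ≤ n - k
  · rw [jump_N h]
    have : (onesCount n x : ℝ) < n := by exact_mod_cast hxn
    linarith
  · rw [jump_gap (by omega) hxn]
    have h0 : (0:ℝ) ≤ onesCount n x := by positivity
    have hk0 : (0:ℝ) < k := by exact_mod_cast (by omega : 0 < k)
    linarith

lemma jump_le_opt {x : Fin n → Bool} (h2 : 2 ≤ k) (hn : k ≤ n) :
    jumpF n k x ≤ jumpF n k (optP n) := by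
  by_cases hx : x = optP n
  · rw [hx]
  · exact le_of_lt (jump_lt_opt h2 hn hx)

include hk2 hkn in
lemma jump_gap_lt_N {z x : Fin n → Bool} (hz1 : n - k < onesCount n z) (hz2 : onesCount n z < n)
    (hx : onesCount n x ≤ n - k) : jumpF n k z < jumpF n k x := by
  rw [jump_gap hz1 hz2, jump_N hx]
  have h1 : (n:ℝ) - onesCount n z ≤ (k:ℝ) - 1 := by
    have : n + 1 ≤ onesCount n z + k := by omega
    have := (Nat.cast_le (α := ℝ)).mpr this
    push_cast at this ⊢
    linarith
  have h2 : (0:ℝ) ≤ onesCount n x := by positivity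
  have : (1:ℝ) ≤ k := by exact_mod_cast (by omega : 1 ≤ k)
  linarith

lemma jump_gap_lt_gap {z x : Fin n → Bool} (hx1 : n - k < onesCount n x) (hx2 : onesCount n x < n)
    (hz2 : onesCount n z < n) (h : onesCount n x < onesCount n z) :
    jumpF n k z < jumpF n k x := by
  rw [jump_gap hx1 hx2, jump_gap (by omega) hz2]
  have : (onesCount n x : ℝ) < onesCount n z := by exact_mod_cast h
  linarith

end Jump

section Step
variable {n : ℕ} {p : ℝ} {f : (Fin n → Bool) → ℝ} {x z : Fin n → Bool}

lemma mutProb_nonneg (hp0 : 0 ≤ p) (hp1 : p ≤ 1) (x y : Fin n → Bool) :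
    0 ≤ mutProb n p x y := by
  have h : (0:ℝ) ≤ 1 - p := by linarith
  exact mul_nonneg (pow_nonneg hp0 _) (pow_nonneg h _)

lemma stepProb_nonneg (hp0 : 0 ≤ p) (hp1 : p ≤ 1) (x z : Fin n → Bool) :
    0 ≤ stepProb n p f x z := by
  apply Finset.sum_nonneg
  intro y _
  by_cases h : (if f x ≤ f y then y else x) = z
  · rw [if_pos h]; exact mutProb_nonneg hp0 hp1 x y
  · rw [if_neg h]

lemma sum_stepProb (x : Fin n → Bool) : ∑ z, stepProb n p f x z = 1 := by
  classical
  unfold stepProb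
  rw [Finset.sum_comm]
  have h : ∀ y : Fin n → Bool,
      (∑ z, if (if f x ≤ f y then y else x) = z then mutProb n p x y else 0)
        = mutProb n p x y := by
    intro y
    rw [Finset.sum_ite_eq Finset.univ (if f x ≤ f y then y else x) (fun _ => mutProb n p x y)]
    simp
  rw [Finset.sum_congr rfl (fun y _ => h y)]
  exact sum_mutProb p x

lemma stepProb_eq_zero (hzx : z ≠ x) (h : f z < f x) : stepProb n p f x z = 0 := by
  apply Finset.sum_eq_zero
  intro y _
  apply if_neg
  by_cases hacc : f x ≤ f y
  · rw [if_pos hacc]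
    rintro rfl
    exact absurd hacc (not_le.mpr h)
  · rw [if_neg hacc]
    exact fun hh => hzx hh.symm

lemma mutProb_le_stepProb (hp0 : 0 ≤ p) (hp1 : p ≤ 1) (h : f x ≤ f z) :
    mutProb n p x z ≤ stepProb n p f x z := by
  classical
  have := Finset.single_le_sum (f := fun y : Fin n → Bool =>
      if (if f x ≤ f y then y else x) = z then mutProb n p x y else 0)
    (fun y _ => by
      by_cases hc : (if f x ≤ f y then y else x) = z
      · rw [if_pos hc]; exact mutProb_nonneg hp0 hp1 x y
      · rw [if_neg hc])
    (Finset.mem_univ z)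
  simpa [if_pos h, stepProb] using this

lemma stepProb_eq_mut_of_max (hmax : ∀ y, y ≠ z → f y < f z) (hx : x ≠ z) :
    stepProb n p f x z = mutProb n p x z := by
  classical
  rw [stepProb, Finset.sum_eq_single z]
  · rw [if_pos]
    rw [if_pos (le_of_lt (hmax x hx))]
  · intro y _ hy
    apply if_neg
    by_cases hacc : f x ≤ f y
    · rw [if_pos hacc]; exact hy
    · rw [if_neg hacc]; exact hx
  · intro hz; exact absurd (Finset.mem_univ z) hz

lemma stepProb_self_of_max (hmax : ∀ y, y ≠ z → f y < f z) :
    stepProb n p f z z = 1 := by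
  classical
  have h : ∀ y : Fin n → Bool,
      (if (if f z ≤ f y then y else z) = z then mutProb n p z y else 0) = mutProb n p z y := by
    intro y
    apply if_pos
    by_cases hy : y = z
    · rw [if_pos (hy ▸ le_refl (f z))]; exact hy
    · rw [if_neg (not_le.mpr (hmax y hy))]
  rw [stepProb, Finset.sum_congr rfl (fun y _ => h y)]
  exact sum_mutProb p z

end Step

section StepJump
variable {n k : ℕ} (hk2 : 2 ≤ k) (hkn : k ≤ n)

/-- the real success probability of a direct jump to the optimum -/
noncomputable def pkR (n k : ℕ) : ℝ := (1 - 1/(n:ℝ))^(n-k) / (n:ℝ)^k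

include hk2 hkn

lemma hn2 : 2 ≤ n := le_trans hk2 hkn

lemma hp0 : (0:ℝ) ≤ 1/(n:ℝ) := by positivity

lemma hp1 : (1:ℝ)/(n:ℝ) ≤ 1 := by
  have h : (1:ℝ) ≤ (n:ℝ) := by exact_mod_cast le_trans (by omega) (hn2 hk2 hkn)
  rw [div_le_one (by linarith)]
  exact h

lemma hphalf : (1:ℝ)/(n:ℝ) ≤ 1 - 1/(n:ℝ) := by
  have h : (2:ℝ) ≤ (n:ℝ) := by exact_mod_cast hn2 hk2 hkn
  have hn0 : (0:ℝ) < n := by linarith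
  rw [div_le_iff₀ hn0, sub_mul, div_mul_cancel₀ _ (ne_of_gt hn0)]
  linarith [(div_le_one hn0).mpr h]

lemma step_opt_opt : stepProb n (1/(n:ℝ)) (jumpF n k) (optP n) (optP n) = 1 :=
  stepProb_self_of_max (fun y hy => jump_lt_opt hk2 hkn hy)

lemma step_to_opt {x : Fin n → Bool} (hx : x ≠ optP n) :
    stepProb n (1/(n:ℝ)) (jumpF n k) x (optP n)
      = (1/(n:ℝ))^(n - onesCount n x) * (1 - 1/(n:ℝ))^(onesCount n x) := by
  rw [stepProb_eq_mut_of_max (f := jumpF n k) (z := optP n) (x := x)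
    (fun y hy => jump_lt_opt hk2 hkn hy) hx]
  rw [mutProb, hammingDist_opt]
  congr 2
  have h1 := onesCount_le n x
  omega

lemma step_to_opt_le_pk {x : Fin n → Bool} (hx : onesCount n x ≤ n - k) :
    stepProb n (1/(n:ℝ)) (jumpF n k) x (optP n) ≤ pkR n k := by
  have hxne : x ≠ optP n := by
    intro h
    rw [h, (onesCount_eq_n_iff n (optP n)).mpr rfl] at hx
    omega
  rw [step_to_opt hk2 hkn hxne]
  set m := onesCount n x with hm
  obtain ⟨d, hd1, hd2⟩ : ∃ d, n - m = k + d ∧ n - k = m + d := ⟨n - k - m, by omega, by omega⟩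
  have hq0 : (0:ℝ) ≤ 1 - 1/(n:ℝ) := le_trans (hp0 hk2 hkn) (hphalf hk2 hkn)
  have hp0' := hp0 (n := n) (k := k) hk2 hkn
  have key : ((1:ℝ)/n)^d ≤ (1 - 1/(n:ℝ))^d :=
    pow_le_pow_left₀ hp0' (hphalf hk2 hkn) _
  have expand : ((1:ℝ)/n)^(n-m) * (1 - 1/(n:ℝ))^m
      = (((1:ℝ)/n)^d * (1 - 1/(n:ℝ))^m) * ((1:ℝ)/n)^k := by
    rw [hd1, pow_add]; ring
  have hinv : ((1:ℝ)/n)^k = ((n:ℝ)^k)⁻¹ := by rw [one_div, inv_pow]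
  have expand2 : pkR n k = ((1 - 1/(n:ℝ))^d * (1 - 1/(n:ℝ))^m) * ((1:ℝ)/n)^k := by
    rw [pkR, hd2, pow_add, hinv, div_eq_mul_inv]
    ring
  rw [expand, expand2]
  apply mul_le_mul_of_nonneg_right _ (by positivity)
  apply mul_le_mul_of_nonneg_right key (by positivity)

lemma step_to_opt_le_gap {x : Fin n → Bool} (hx2 : onesCount n x < n) :
    stepProb n (1/(n:ℝ)) (jumpF n k) x (optP n) ≤ ((1:ℝ)/n)^(n - onesCount n x) := by
  have hxne : x ≠ optP n := by
    intro h; rw [h, (onesCount_eq_n_iff n (optP n)).mpr rfl] at hx2; omega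
  rw [step_to_opt hk2 hkn hxne]
  have hq0 : (0:ℝ) ≤ 1 - 1/(n:ℝ) := le_trans (hp0 hk2 hkn) (hphalf hk2 hkn)
  have hq1 : (1 - 1/(n:ℝ)) ≤ 1 := by
    have := hp0 (n := n) (k := k) hk2 hkn; linarith
  calc ((1:ℝ)/n)^(n - onesCount n x) * (1 - 1/(n:ℝ))^(onesCount n x)
      ≤ ((1:ℝ)/n)^(n - onesCount n x) * 1 := by
        apply mul_le_mul_of_nonneg_left _ (by positivity)
        exact pow_le_one₀ hq0 hq1
    _ = ((1:ℝ)/n)^(n - onesCount n x) := by ring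

lemma gap_exit {x : Fin n → Bool} (hx1 : n - k < onesCount n x) (hx2 : onesCount n x < n)
    {A : Finset (Fin n → Bool)} (hA : ∀ z ∈ A, onesCount n x ≤ onesCount n z) :
    ∑ z ∈ A, stepProb n (1/(n:ℝ)) (jumpF n k) x z
      ≤ 1 - (onesCount n x : ℝ) * ((1/(n:ℝ)) * (1 - 1/(n:ℝ))^(n-1)) := by
  classical
  set m := onesCount n x with hm
  have hm1 : 1 ≤ m := by omega
  set D := (Finset.univ.filter fun i : Fin n => x i = true).image
    (fun i => Function.update x i false) with hD
  have hmemD : ∀ z ∈ D, ∃ i, x i = true ∧ z = Function.update x i false := by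
    intro z hz
    rcases Finset.mem_image.mp hz with ⟨i, hi, hzi⟩
    exact ⟨i, (Finset.mem_filter.mp hi).2, hzi.symm⟩
  have hDcard : D.card = m := by
    rw [hD, Finset.card_image_of_injOn]
    · rfl
    · intro i hi j hj hij
      by_contra hne
      have h2 := congrFun hij i
      simp only [Function.update_self, Function.update_of_ne hne] at h2
      have hxi : x i = true := (Finset.mem_filter.mp (Finset.mem_coe.mp hi)).2
      rw [hxi] at h2
      exact Bool.false_ne_true h2
  have hDlevel : ∀ z ∈ D, onesCount n z = m - 1 := by
    intro z hz
    rcases hmemD z hz with ⟨i, hi, rfl⟩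
    rw [onesCount_update hi]
  have haccept : ∀ z ∈ D, jumpF n k x ≤ jumpF n k z := by
    intro z hz
    have hlev := hDlevel z hz
    rw [jump_gap hx1 hx2]
    by_cases hc : onesCount n z ≤ n - k
    · rw [jump_N hc]
      have h1 : n ≤ onesCount n z + k := by omega
      have h1' : (n:ℝ) ≤ (onesCount n z : ℝ) + k := by exact_mod_cast h1
      have h2 : (0:ℝ) ≤ (m:ℝ) := by positivity
      linarith
    · rw [jump_gap (by omega) (by omega)]
      have : (onesCount n z : ℝ) ≤ (m:ℝ) := by exact_mod_cast (by omega : onesCount n z ≤ m)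
      linarith
  have hmut : ∀ z ∈ D, mutProb n (1/(n:ℝ)) x z = (1/(n:ℝ)) * (1 - 1/(n:ℝ))^(n-1) := by
    intro z hz
    rcases hmemD z hz with ⟨i, hi, rfl⟩
    rw [mutProb, hammingDist_update, if_pos hi]
    rw [pow_one]
  have hdisj : Disjoint A D := by
    rw [Finset.disjoint_left]
    intro z hzA hzD
    have := hA z hzA
    have := hDlevel z hzD
    omega
  have hsub : A ⊆ Finset.univ \ D := by
    intro z hz
    rw [Finset.mem_sdiff]
    exact ⟨Finset.mem_univ z, Finset.disjoint_left.mp hdisj hz⟩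
  have hnn : ∀ z ∈ Finset.univ \ D, 0 ≤ stepProb n (1/(n:ℝ)) (jumpF n k) x z :=
    fun z _ => stepProb_nonneg (hp0 hk2 hkn) (hp1 hk2 hkn) x z
  calc ∑ z ∈ A, stepProb n (1/(n:ℝ)) (jumpF n k) x z
      ≤ ∑ z ∈ Finset.univ \ D, stepProb n (1/(n:ℝ)) (jumpF n k) x z :=
        Finset.sum_le_sum_of_subset_of_nonneg hsub (fun z hz _ => hnn z hz)
    _ = 1 - ∑ z ∈ D, stepProb n (1/(n:ℝ)) (jumpF n k) x z := by
        rw [Finset.sum_sdiff_eq_sub (Finset.subset_univ D), sum_stepProb]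
    _ ≤ 1 - (m:ℝ) * ((1/(n:ℝ)) * (1 - 1/(n:ℝ))^(n-1)) := by
        have : (m:ℝ) * ((1/(n:ℝ)) * (1 - 1/(n:ℝ))^(n-1))
            ≤ ∑ z ∈ D, stepProb n (1/(n:ℝ)) (jumpF n k) x z := by
          calc (m:ℝ) * ((1/(n:ℝ)) * (1 - 1/(n:ℝ))^(n-1))
              = ∑ _z ∈ D, ((1/(n:ℝ)) * (1 - 1/(n:ℝ))^(n-1)) := by
                rw [Finset.sum_const, hDcard, nsmul_eq_mul]
            _ ≤ ∑ z ∈ D, stepProb n (1/(n:ℝ)) (jumpF n k) x z := by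
                apply Finset.sum_le_sum
                intro z hz
                rw [← hmut z hz]
                exact mutProb_le_stepProb (hp0 hk2 hkn) (hp1 hk2 hkn) (haccept z hz)
        linarith
end StepJump

section Chain
variable {n k : ℕ} {Ω : Type} [MeasurableSpace Ω] {μ : MeasureTheory.Measure Ω}
  {Y : ℕ → Ω → Fin n → Bool}

open MeasureTheory

lemma measSet_all (S : Set (Fin n → Bool)) : MeasurableSet S :=
  S.to_countable.measurableSet

lemma meas_event (hY : ∀ t, Measurable (Y t)) (t : ℕ) (S : Set (Fin n → Bool)) :
    MeasurableSet {ω | Y t ω ∈ S} := hY t (measSet_all S)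

/-- the distribution of the current search point, as a real-valued function -/
noncomputable def rpm (μ : MeasureTheory.Measure Ω) (Y : ℕ → Ω → Fin n → Bool)
    (t : ℕ) (x : Fin n → Bool) : ℝ := (μ {ω | Y t ω = x}).toReal

variable [MeasureTheory.IsProbabilityMeasure μ]

lemma rpm_nonneg (t : ℕ) (x : Fin n → Bool) : 0 ≤ rpm μ Y t x := ENNReal.toReal_nonneg

lemma sum_rpm_subset (hY : ∀ t, Measurable (Y t)) (t : ℕ) (S : Finset (Fin n → Bool)) :
    ∑ x ∈ S, rpm μ Y t x = (μ {ω | Y t ω ∈ (S : Set (Fin n → Bool))}).toReal := by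
  simp only [rpm]
  rw [← ENNReal.toReal_sum (fun x _ => measure_ne_top μ _)]
  congr 1
  have h := MeasureTheory.sum_measure_preimage_singleton (μ := μ) S
    (f := Y t) (fun y _ => meas_event hY t {y})
  simpa [Set.preimage] using h

lemma sum_rpm_one (hY : ∀ t, Measurable (Y t)) (t : ℕ) :
    ∑ x, rpm μ Y t x = 1 := by
  rw [sum_rpm_subset hY t Finset.univ]
  simp

lemma rpm_le_one (hY : ∀ t, Measurable (Y t)) (t : ℕ) (x : Fin n → Bool) :
    rpm μ Y t x ≤ 1 := by
  have h := sum_rpm_one (μ := μ) hY t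
  have := Finset.single_le_sum (f := fun x => rpm μ Y t x)
    (fun y _ => rpm_nonneg t y) (Finset.mem_univ x)
  · rw [h] at this; exact this

lemma rpm_rec {p : ℝ} {f : (Fin n → Bool) → ℝ} (hY : IsEARun μ n p f Y)
    (hp0 : 0 ≤ p) (hp1 : p ≤ 1) (t : ℕ) (z : Fin n → Bool) :
    rpm μ Y (t+1) z = ∑ x, stepProb n p f x z * rpm μ Y t x := by
  classical
  have hpart : {ω | Y (t+1) ω = z} = ⋃ x ∈ (Finset.univ : Finset (Fin n → Bool)),
      {ω | Y (t+1) ω = z ∧ Y t ω = x} := by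
    ext ω
    simp only [Set.mem_setOf_eq, Set.mem_iUnion]
    constructor
    · intro h; exact ⟨Y t ω, Finset.mem_univ _, h, rfl⟩
    · rintro ⟨x, _, h, _⟩; exact h
  have hmeas : ∀ x ∈ (Finset.univ : Finset (Fin n → Bool)),
      MeasurableSet {ω | Y (t+1) ω = z ∧ Y t ω = x} := by
    intro x _
    have : {ω | Y (t+1) ω = z ∧ Y t ω = x}
        = {ω | Y (t+1) ω ∈ ({z} : Set _)} ∩ {ω | Y t ω ∈ ({x} : Set _)} := by
      ext ω; simp [Set.mem_setOf_eq]
    rw [this]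
    exact (meas_event hY.1 (t+1) {z}).inter (meas_event hY.1 t {x})
  have hdisj : (↑(Finset.univ : Finset (Fin n → Bool)) : Set (Fin n → Bool)).PairwiseDisjoint
      (fun x => {ω | Y (t+1) ω = z ∧ Y t ω = x}) := by
    intro a _ b _ hab
    apply Set.disjoint_left.mpr
    rintro ω ⟨_, ha⟩ ⟨_, hb⟩
    exact hab (ha ▸ hb ▸ rfl)
  have h1 : μ {ω | Y (t+1) ω = z}
      = ∑ x, μ {ω | Y (t+1) ω = z ∧ Y t ω = x} := by
    rw [hpart, measure_biUnion_finset hdisj hmeas]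
  have h2 : ∀ x, μ {ω | Y (t+1) ω = z ∧ Y t ω = x}
      = ENNReal.ofReal (stepProb n p f x z) * μ {ω | Y t ω = x} := fun x => hY.2 t x z
  rw [rpm, h1]
  rw [Finset.sum_congr rfl (fun x _ => h2 x)]
  rw [ENNReal.toReal_sum (fun x _ => by
    exact ENNReal.mul_ne_top ENNReal.ofReal_ne_top (measure_ne_top μ _))]
  apply Finset.sum_congr rfl
  intro x _
  rw [ENNReal.toReal_mul, ENNReal.toReal_ofReal (stepProb_nonneg hp0 hp1 x z)]
  rfl

lemma sum_rpm_rec {p : ℝ} {f : (Fin n → Bool) → ℝ} (hY : IsEARun μ n p f Y)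
    (hp0 : 0 ≤ p) (hp1 : p ≤ 1) (t : ℕ) (S : Finset (Fin n → Bool)) :
    ∑ z ∈ S, rpm μ Y (t+1) z = ∑ x, (∑ z ∈ S, stepProb n p f x z) * rpm μ Y t x := by
  rw [Finset.sum_congr rfl (fun z _ => rpm_rec hY hp0 hp1 t z), Finset.sum_comm]
  apply Finset.sum_congr rfl
  intro x _
  rw [Finset.sum_mul]

end Chain

section Dynamics
open MeasureTheory

/-- expected one-step progress out of level `m` -/
noncomputable def deltaC (n m : ℕ) : ℝ := m * ((1/(n:ℝ)) * (1 - 1/(n:ℝ))^(n-1))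

def lvlF (n m : ℕ) : Finset (Fin n → Bool) := Finset.univ.filter fun x => onesCount n x = m
def AFm (n m : ℕ) : Finset (Fin n → Bool) :=
  Finset.univ.filter fun x => m ≤ onesCount n x ∧ onesCount n x < n
def NFk (n k : ℕ) : Finset (Fin n → Bool) := Finset.univ.filter fun x => onesCount n x ≤ n - k
def gapFk (n k : ℕ) : Finset (Fin n → Bool) :=
  Finset.univ.filter fun x => n - k < onesCount n x ∧ onesCount n x < n

/-- total flow from the gap into the optimum at time `t` -/
noncomputable def flt {Ω : Type} [MeasurableSpace Ω] (μ : MeasureTheory.Measure Ω)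
    {n : ℕ} (Y : ℕ → Ω → Fin n → Bool) (k t : ℕ) : ℝ :=
  ∑ x ∈ gapFk n k, stepProb n (1/(n:ℝ)) (jumpF n k) x (optP n) * rpm μ Y t x

/-- bound for the total gap-to-optimum flow over all times -/
noncomputable def BBv {Ω : Type} [MeasurableSpace Ω] (μ : MeasureTheory.Measure Ω)
    {n : ℕ} (Y : ℕ → Ω → Fin n → Bool) (k : ℕ) : ℝ :=
  ∑ m ∈ Finset.Ico (n-k+1) n,
    (1/(n:ℝ))^(n-m) * ((∑ x ∈ AFm n m, rpm μ Y 0 x) / deltaC n m)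

/-- bound for the total time spent in the gap -/
noncomputable def KKv {Ω : Type} [MeasurableSpace Ω] (μ : MeasureTheory.Measure Ω)
    {n : ℕ} (Y : ℕ → Ω → Fin n → Bool) (k : ℕ) : ℝ :=
  ∑ m ∈ Finset.Ico (n-k+1) n, ((∑ x ∈ AFm n m, rpm μ Y 0 x) / deltaC n m)

variable {n k : ℕ} {Ω : Type} [MeasurableSpace Ω] {μ : MeasureTheory.Measure Ω}
  {Y : ℕ → Ω → Fin n → Bool} [MeasureTheory.IsProbabilityMeasure μ]
variable (hk2 : 2 ≤ k) (hkn : k ≤ n) (hY : IsEARun μ n (1/(n:ℝ)) (jumpF n k) Y)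

include hk2 hkn

lemma deltaC_pos {m : ℕ} (hm1 : 1 ≤ m) : 0 < deltaC n m := by
  have hn : (2:ℝ) ≤ n := by exact_mod_cast hn2 hk2 hkn
  have h1 : (0:ℝ) < 1/(n:ℝ) := by positivity
  have h2 : (0:ℝ) < 1 - 1/(n:ℝ) := lt_of_lt_of_le h1 (hphalf hk2 hkn)
  have hm : (0:ℝ) < m := by exact_mod_cast hm1
  rw [deltaC]
  positivity

lemma pkR_nonneg : 0 ≤ pkR n k := by
  have h1 : (0:ℝ) ≤ 1/(n:ℝ) := hp0 hk2 hkn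
  have h2 : (0:ℝ) ≤ 1 - 1/(n:ℝ) := le_trans h1 (hphalf hk2 hkn)
  have hn : (0:ℝ) ≤ (n:ℝ) := by positivity
  rw [pkR]
  positivity

include hY

lemma level_drift {m : ℕ} (hm1 : n - k < m) (hm2 : m < n) (t : ℕ) :
    ∑ z ∈ AFm n m, rpm μ Y (t+1) z
      ≤ ∑ x ∈ AFm n m, rpm μ Y t x - deltaC n m * ∑ x ∈ lvlF n m, rpm μ Y t x := by
  classical
  rw [sum_rpm_rec hY (hp0 hk2 hkn) (hp1 hk2 hkn) t (AFm n m)]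
  have hcoef : ∀ x : Fin n → Bool,
      (∑ z ∈ AFm n m, stepProb n (1/(n:ℝ)) (jumpF n k) x z) * rpm μ Y t x
        ≤ (if x ∈ AFm n m
            then (if onesCount n x = m then 1 - deltaC n m else 1) * rpm μ Y t x else 0) := by
    intro x
    by_cases hx : x ∈ AFm n m
    · rw [if_pos hx]
      apply mul_le_mul_of_nonneg_right _ (rpm_nonneg t x)
      obtain ⟨-, hx1, hx2⟩ := Finset.mem_filter.mp hx
      by_cases hxm : onesCount n x = m
      · rw [if_pos hxm, deltaC, ← hxm]
        exact gap_exit hk2 hkn (x := x) (by omega) hx2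
          (A := AFm n (onesCount n x))
          (fun z hz => by
            have := (Finset.mem_filter.mp hz).2.1
            omega)
      · rw [if_neg hxm]
        calc ∑ z ∈ AFm n m, stepProb n (1/(n:ℝ)) (jumpF n k) x z
            ≤ ∑ z, stepProb n (1/(n:ℝ)) (jumpF n k) x z :=
              Finset.sum_le_sum_of_subset_of_nonneg (Finset.subset_univ _)
                (fun z _ _ => stepProb_nonneg (hp0 hk2 hkn) (hp1 hk2 hkn) x z)
          _ = 1 := sum_stepProb x
    · rw [if_neg hx]
      have hzero : ∀ z ∈ AFm n m, stepProb n (1/(n:ℝ)) (jumpF n k) x z = 0 := by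
        intro z hz
        obtain ⟨-, hz1, hz2⟩ := Finset.mem_filter.mp hz
        have hzx : z ≠ x := fun h => hx (h ▸ hz)
        apply stepProb_eq_zero hzx
        have hxA : ¬(m ≤ onesCount n x ∧ onesCount n x < n) :=
          fun h => hx (Finset.mem_filter.mpr ⟨Finset.mem_univ x, h⟩)
        have hle := onesCount_le n x
        by_cases hxn : onesCount n x = n
        · have hxopt : x = optP n := (onesCount_eq_n_iff n x).mp hxn
          rw [hxopt]
          apply jump_lt_opt hk2 hkn
          intro hzopt
          rw [hzopt, (onesCount_eq_n_iff n (optP n)).mpr rfl] at hz2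
          omega
        · have hxm : onesCount n x < m := by omega
          by_cases hxN : onesCount n x ≤ n - k
          · exact jump_gap_lt_N hk2 hkn (lt_of_lt_of_le hm1 hz1) hz2 hxN
          · exact jump_gap_lt_gap (by omega) (by omega) hz2 (by omega)
      rw [Finset.sum_eq_zero hzero, zero_mul]
  calc ∑ x, (∑ z ∈ AFm n m, stepProb n (1/(n:ℝ)) (jumpF n k) x z) * rpm μ Y t x
      ≤ ∑ x, (if x ∈ AFm n m
            then (if onesCount n x = m then 1 - deltaC n m else 1) * rpm μ Y t x else 0) :=
        Finset.sum_le_sum (fun x _ => hcoef x)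
    _ = ∑ x ∈ AFm n m, (if onesCount n x = m then 1 - deltaC n m else 1) * rpm μ Y t x := by
        rw [Finset.sum_ite_mem, Finset.univ_inter]
    _ = ∑ x ∈ AFm n m, rpm μ Y t x - deltaC n m * ∑ x ∈ lvlF n m, rpm μ Y t x := by
        have hsplit : ∀ x ∈ AFm n m,
            (if onesCount n x = m then 1 - deltaC n m else 1) * rpm μ Y t x
              = rpm μ Y t x - (if onesCount n x = m then deltaC n m * rpm μ Y t x else 0) := by
          intro x _
          by_cases hxm : onesCount n x = m
          · rw [if_pos hxm, if_pos hxm]; ring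
          · rw [if_neg hxm, if_neg hxm]; ring
        rw [Finset.sum_congr rfl hsplit, Finset.sum_sub_distrib]
        congr 1
        rw [← Finset.sum_filter, Finset.mul_sum]
        apply Finset.sum_congr _ (fun x _ => rfl)
        ext x
        simp only [AFm, lvlF, Finset.mem_filter, Finset.mem_univ, true_and]
        constructor
        · tauto
        · intro h; exact ⟨⟨le_of_eq h.symm, h ▸ hm2⟩, h⟩

lemma occupancy {m : ℕ} (hm1 : n - k < m) (hm2 : m < n) (T : ℕ) :
    deltaC n m * ∑ t ∈ Finset.range T, (∑ x ∈ lvlF n m, rpm μ Y t x)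
      ≤ ∑ x ∈ AFm n m, rpm μ Y 0 x := by
  have h1 : ∀ t, deltaC n m * (∑ x ∈ lvlF n m, rpm μ Y t x)
      ≤ (∑ x ∈ AFm n m, rpm μ Y t x) - (∑ x ∈ AFm n m, rpm μ Y (t+1) x) := by
    intro t
    have := level_drift hk2 hkn hY hm1 hm2 t
    linarith
  have hTnn : 0 ≤ ∑ x ∈ AFm n m, rpm μ Y T x :=
    Finset.sum_nonneg (fun x _ => rpm_nonneg T x)
  calc deltaC n m * ∑ t ∈ Finset.range T, (∑ x ∈ lvlF n m, rpm μ Y t x)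
      = ∑ t ∈ Finset.range T, deltaC n m * (∑ x ∈ lvlF n m, rpm μ Y t x) := Finset.mul_sum _ _ _
    _ ≤ ∑ t ∈ Finset.range T,
        ((∑ x ∈ AFm n m, rpm μ Y t x) - (∑ x ∈ AFm n m, rpm μ Y (t+1) x)) :=
        Finset.sum_le_sum (fun t _ => h1 t)
    _ = (∑ x ∈ AFm n m, rpm μ Y 0 x) - (∑ x ∈ AFm n m, rpm μ Y T x) :=
        Finset.sum_range_sub' (fun t => ∑ x ∈ AFm n m, rpm μ Y t x) T
    _ ≤ ∑ x ∈ AFm n m, rpm μ Y 0 x := by linarith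

lemma gap_fiber {m : ℕ} (hm : m ∈ Finset.Ico (n-k+1) n) :
    (gapFk n k).filter (fun x => onesCount n x = m) = lvlF n m := by
  obtain ⟨hm1, hm2⟩ := Finset.mem_Ico.mp hm
  ext x
  simp only [gapFk, lvlF, Finset.mem_filter, Finset.mem_univ, true_and]
  constructor
  · tauto
  · intro h; exact ⟨⟨by omega, by omega⟩, h⟩

lemma gap_maps_to : ∀ x ∈ gapFk n k, onesCount n x ∈ Finset.Ico (n-k+1) n := by
  intro x hx
  obtain ⟨-, h1, h2⟩ := Finset.mem_filter.mp hx
  rw [Finset.mem_Ico]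
  omega

lemma flt_le (t : ℕ) :
    flt μ Y k t
      ≤ ∑ m ∈ Finset.Ico (n-k+1) n, (1/(n:ℝ))^(n-m) * (∑ x ∈ lvlF n m, rpm μ Y t x) := by
  rw [flt, ← Finset.sum_fiberwise_of_maps_to (gap_maps_to hk2 hkn hY)
    (fun x => stepProb n (1/(n:ℝ)) (jumpF n k) x (optP n) * rpm μ Y t x)]
  apply Finset.sum_le_sum
  intro m hm
  rw [gap_fiber hk2 hkn hY hm, Finset.mul_sum]
  apply Finset.sum_le_sum
  intro x hx
  have hxm : onesCount n x = m := (Finset.mem_filter.mp hx).2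
  apply mul_le_mul_of_nonneg_right _ (rpm_nonneg t x)
  have hmlt : m < n := (Finset.mem_Ico.mp hm).2
  have hstep := step_to_opt_le_gap hk2 hkn (x := x) (by omega : onesCount n x < n)
  rw [hxm] at hstep
  exact hstep

lemma gapsum_eq (t : ℕ) :
    ∑ x ∈ gapFk n k, rpm μ Y t x
      = ∑ m ∈ Finset.Ico (n-k+1) n, (∑ x ∈ lvlF n m, rpm μ Y t x) := by
  rw [← Finset.sum_fiberwise_of_maps_to (gap_maps_to hk2 hkn hY) (fun x => rpm μ Y t x)]
  apply Finset.sum_congr rfl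
  intro m hm
  rw [gap_fiber hk2 hkn hY hm]

lemma flux_total (T : ℕ) : ∑ t ∈ Finset.range T, flt μ Y k t ≤ BBv μ Y k := by
  calc ∑ t ∈ Finset.range T, flt μ Y k t
      ≤ ∑ t ∈ Finset.range T, ∑ m ∈ Finset.Ico (n-k+1) n,
          (1/(n:ℝ))^(n-m) * (∑ x ∈ lvlF n m, rpm μ Y t x) :=
        Finset.sum_le_sum (fun t _ => flt_le hk2 hkn hY t)
    _ = ∑ m ∈ Finset.Ico (n-k+1) n,
          (1/(n:ℝ))^(n-m) * ∑ t ∈ Finset.range T, (∑ x ∈ lvlF n m, rpm μ Y t x) := by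
        rw [Finset.sum_comm]
        exact Finset.sum_congr rfl (fun m _ => (Finset.mul_sum _ _ _).symm)
    _ ≤ BBv μ Y k := by
        apply Finset.sum_le_sum
        intro m hm
        obtain ⟨hm1, hm2⟩ := Finset.mem_Ico.mp hm
        have hd := deltaC_pos hk2 hkn (m := m) (by omega)
        have hocc := occupancy hk2 hkn hY (m := m) (by omega) hm2 T
        apply mul_le_mul_of_nonneg_left _ (by positivity)
        rw [le_div_iff₀ hd, mul_comm]
        exact hocc

lemma gapsum_total (T : ℕ) :
    ∑ t ∈ Finset.range T, (∑ x ∈ gapFk n k, rpm μ Y t x) ≤ KKv μ Y k := by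
  calc ∑ t ∈ Finset.range T, (∑ x ∈ gapFk n k, rpm μ Y t x)
      = ∑ t ∈ Finset.range T, ∑ m ∈ Finset.Ico (n-k+1) n,
          (∑ x ∈ lvlF n m, rpm μ Y t x) :=
        Finset.sum_congr rfl (fun t _ => gapsum_eq hk2 hkn hY t)
    _ = ∑ m ∈ Finset.Ico (n-k+1) n, ∑ t ∈ Finset.range T,
          (∑ x ∈ lvlF n m, rpm μ Y t x) := Finset.sum_comm
    _ ≤ KKv μ Y k := by
        apply Finset.sum_le_sum
        intro m hm
        obtain ⟨hm1, hm2⟩ := Finset.mem_Ico.mp hm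
        have hd := deltaC_pos hk2 hkn (m := m) (by omega)
        have hocc := occupancy hk2 hkn hY (m := m) (by omega) hm2 T
        rw [le_div_iff₀ hd, mul_comm]
        exact hocc

end Dynamics

section Drift
open MeasureTheory
variable {n k : ℕ} {Ω : Type} [MeasurableSpace Ω] {μ : MeasureTheory.Measure Ω}
  {Y : ℕ → Ω → Fin n → Bool} [MeasureTheory.IsProbabilityMeasure μ]
variable (hk2 : 2 ≤ k) (hkn : k ≤ n) (hY : IsEARun μ n (1/(n:ℝ)) (jumpF n k) Y)

include hk2 hkn hY

lemma opt_rec (t : ℕ) :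
    rpm μ Y (t+1) (optP n)
      ≤ rpm μ Y t (optP n) + pkR n k * (1 - rpm μ Y t (optP n)) + flt μ Y k t := by
  classical
  rw [rpm_rec hY (hp0 hk2 hkn) (hp1 hk2 hkn) t (optP n)]
  have hkn' : n - k < n := by omega
  have hdisj1 : Disjoint (NFk n k) (gapFk n k) := by
    rw [Finset.disjoint_left]
    intro x h1 h2
    have := (Finset.mem_filter.mp h1).2
    have := (Finset.mem_filter.mp h2).2
    omega
  have hdisj2 : Disjoint (NFk n k ∪ gapFk n k) {optP n} := by
    rw [Finset.disjoint_right]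
    intro x hx hmem
    rw [Finset.mem_singleton] at hx
    have hxn : onesCount n x = n := by
      rw [hx]; exact (onesCount_eq_n_iff n (optP n)).mpr rfl
    rcases Finset.mem_union.mp hmem with h | h
    · have := (Finset.mem_filter.mp h).2; omega
    · have := (Finset.mem_filter.mp h).2; omega
  have hsplit : (Finset.univ : Finset (Fin n → Bool)) = (NFk n k ∪ gapFk n k) ∪ {optP n} := by
    ext x
    simp only [Finset.mem_univ, true_iff, Finset.mem_union, Finset.mem_singleton,
      NFk, gapFk, Finset.mem_filter, Finset.mem_univ, true_and]
    have hle := onesCount_le n x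
    by_cases hxn : onesCount n x = n
    · right; exact (onesCount_eq_n_iff n x).mp hxn
    · left
      by_cases hN : onesCount n x ≤ n - k
      · left; exact hN
      · right; omega
  rw [hsplit, Finset.sum_union hdisj2, Finset.sum_union hdisj1, Finset.sum_singleton]
  have h1 : stepProb n (1/(n:ℝ)) (jumpF n k) (optP n) (optP n) * rpm μ Y t (optP n)
      = rpm μ Y t (optP n) := by
    rw [step_opt_opt hk2 hkn, one_mul]
  have hNub : ∑ x ∈ NFk n k, rpm μ Y t x ≤ 1 - rpm μ Y t (optP n) := by
    have hdisj3 : Disjoint (NFk n k) {optP n} :=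
      Finset.disjoint_of_subset_left Finset.subset_union_left hdisj2
    have hsum : ∑ x ∈ NFk n k ∪ {optP n}, rpm μ Y t x ≤ 1 := by
      rw [← sum_rpm_one (μ := μ) (Y := Y) hY.1 t]
      exact Finset.sum_le_sum_of_subset_of_nonneg (Finset.subset_univ _)
        (fun x _ _ => rpm_nonneg t x)
    rw [Finset.sum_union hdisj3, Finset.sum_singleton] at hsum
    linarith
  have h2 : ∑ x ∈ NFk n k, stepProb n (1/(n:ℝ)) (jumpF n k) x (optP n) * rpm μ Y t x
      ≤ pkR n k * (1 - rpm μ Y t (optP n)) := by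
    calc ∑ x ∈ NFk n k, stepProb n (1/(n:ℝ)) (jumpF n k) x (optP n) * rpm μ Y t x
        ≤ ∑ x ∈ NFk n k, pkR n k * rpm μ Y t x := by
          apply Finset.sum_le_sum
          intro x hx
          exact mul_le_mul_of_nonneg_right
            (step_to_opt_le_pk hk2 hkn (Finset.mem_filter.mp hx).2) (rpm_nonneg t x)
      _ = pkR n k * ∑ x ∈ NFk n k, rpm μ Y t x := (Finset.mul_sum _ _ _).symm
      _ ≤ pkR n k * (1 - rpm μ Y t (optP n)) :=
          mul_le_mul_of_nonneg_left hNub (pkR_nonneg hk2 hkn)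
  have h3 : ∑ x ∈ gapFk n k, stepProb n (1/(n:ℝ)) (jumpF n k) x (optP n) * rpm μ Y t x
      = flt μ Y k t := rfl
  linarith

lemma telescope (T : ℕ) :
    (1 - rpm μ Y 0 (optP n)) - (1 - rpm μ Y T (optP n)) - (∑ t ∈ Finset.range T, flt μ Y k t)
      ≤ pkR n k * ∑ t ∈ Finset.range T, (1 - rpm μ Y t (optP n)) := by
  have h : ∀ t, (1 - rpm μ Y t (optP n)) - (1 - rpm μ Y (t+1) (optP n))
      ≤ pkR n k * (1 - rpm μ Y t (optP n)) + flt μ Y k t := by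
    intro t
    have := opt_rec hk2 hkn hY t
    linarith
  have hsum : ∑ t ∈ Finset.range T,
      ((1 - rpm μ Y t (optP n)) - (1 - rpm μ Y (t+1) (optP n)))
        ≤ ∑ t ∈ Finset.range T, (pkR n k * (1 - rpm μ Y t (optP n)) + flt μ Y k t) :=
    Finset.sum_le_sum (fun t _ => h t)
  rw [Finset.sum_range_sub' (fun t => 1 - rpm μ Y t (optP n)) T] at hsum
  rw [Finset.sum_add_distrib, ← Finset.mul_sum] at hsum
  linarith

lemma exists_small_gap {ε : ℝ} (hε : 0 < ε) :
    ∃ t, ∑ x ∈ gapFk n k, rpm μ Y t x < ε := by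
  by_contra hcon
  push_neg at hcon
  set T := ⌈KKv μ Y k / ε⌉₊ + 1 with hT
  have hlb : (T : ℝ) * ε ≤ ∑ t ∈ Finset.range T, (∑ x ∈ gapFk n k, rpm μ Y t x) := by
    have := Finset.card_nsmul_le_sum (Finset.range T)
      (fun t => ∑ x ∈ gapFk n k, rpm μ Y t x) ε (fun t _ => hcon t)
    rwa [Finset.card_range, nsmul_eq_mul] at this
  have hub := gapsum_total hk2 hkn hY T
  have hceil : KKv μ Y k / ε < (T : ℝ) := by
    have := Nat.le_ceil (KKv μ Y k / ε)
    have h2 : ((⌈KKv μ Y k / ε⌉₊ : ℝ)) < T := by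
      rw [hT]; push_cast; linarith
    linarith
  have : KKv μ Y k < (T:ℝ) * ε := by
    rw [div_lt_iff₀ hε] at hceil
    linarith
  linarith

end Drift

section MeasureLevel
open MeasureTheory
variable {n k : ℕ} {Ω : Type} [MeasurableSpace Ω] {μ : MeasureTheory.Measure Ω}
  {Y : ℕ → Ω → Fin n → Bool} [MeasureTheory.IsProbabilityMeasure μ]
variable (hk2 : 2 ≤ k) (hkn : k ≤ n) (hY : IsEARun μ n (1/(n:ℝ)) (jumpF n k) Y)

include hk2 hkn hY

lemma absorb_null (t : ℕ) : μ {ω | Y t ω = optP n ∧ Y (t+1) ω ≠ optP n} = 0 := by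
  classical
  have hstep := hY.2 t (optP n) (optP n)
  rw [step_opt_opt hk2 hkn] at hstep
  simp only [ENNReal.ofReal_one, one_mul] at hstep
  have hsplit : {ω | Y t ω = optP n}
      = {ω | Y (t+1) ω = optP n ∧ Y t ω = optP n}
        ∪ {ω | Y t ω = optP n ∧ Y (t+1) ω ≠ optP n} := by
    ext ω; simp only [Set.mem_setOf_eq, Set.mem_union]; tauto
  have hmeas1 : MeasurableSet {ω | Y (t+1) ω = optP n ∧ Y t ω = optP n} := by
    have : {ω | Y (t+1) ω = optP n ∧ Y t ω = optP n}
        = {ω | Y (t+1) ω ∈ ({optP n} : Set _)} ∩ {ω | Y t ω ∈ ({optP n} : Set _)} := by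
      ext ω; simp [Set.mem_setOf_eq]
    rw [this]
    exact (meas_event hY.1 (t+1) _).inter (meas_event hY.1 t _)
  have hmeas2 : MeasurableSet {ω | Y t ω = optP n ∧ Y (t+1) ω ≠ optP n} := by
    have : {ω | Y t ω = optP n ∧ Y (t+1) ω ≠ optP n}
        = {ω | Y t ω ∈ ({optP n} : Set _)} ∩ {ω | Y (t+1) ω ∈ ({optP n}ᶜ : Set _)} := by
      ext ω; simp [Set.mem_setOf_eq]
    rw [this]
    exact (meas_event hY.1 t _).inter (meas_event hY.1 (t+1) _)
  have hdisj : Disjoint {ω | Y (t+1) ω = optP n ∧ Y t ω = optP n}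
      {ω | Y t ω = optP n ∧ Y (t+1) ω ≠ optP n} := by
    rw [Set.disjoint_left]
    rintro ω ⟨h1, h2⟩ ⟨h3, h4⟩
    exact h4 h1
  have hadd : μ {ω | Y t ω = optP n}
      = μ {ω | Y (t+1) ω = optP n ∧ Y t ω = optP n}
        + μ {ω | Y t ω = optP n ∧ Y (t+1) ω ≠ optP n} := by
    rw [hsplit]
    exact measure_union hdisj hmeas2
  rw [hstep] at hadd
  have hne : μ {ω | Y t ω = optP n} ≠ ⊤ := measure_ne_top μ _
  nth_rewrite 1 [← add_zero (μ {ω | Y t ω = optP n})] at hadd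
  exact ((ENNReal.add_right_inj hne).mp hadd).symm

omit hk2 hkn hY in
lemma exit_exists {ω : Ω} : ∀ T r, r ≤ T → Y r ω = optP n → Y T ω ≠ optP n →
    ∃ s, s < T ∧ Y s ω = optP n ∧ Y (s+1) ω ≠ optP n := by
  intro T
  induction T with
  | zero => intro r hr h1 h2; interval_cases r; exact absurd h1 h2
  | succ T ih =>
    intro r hr h1 h2
    by_cases hT : Y T ω = optP n
    · exact ⟨T, by omega, hT, h2⟩
    · have hrT : r ≤ T := by
        rcases Nat.lt_or_ge r (T+1) with h | h
        · omega
        · exfalso; have : r = T + 1 := by omega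
          rw [this] at h1; exact h2 h1
      obtain ⟨s, hs1, hs2, hs3⟩ := ih r hrT h1 hT
      exact ⟨s, by omega, hs2, hs3⟩

lemma neq_le (T : ℕ) :
    μ {ω | Y T ω ≠ optP n} ≤ μ {ω | ∀ r ≤ T, Y r ω ≠ optP n} := by
  classical
  set B : Set Ω := ⋃ s : ℕ, {ω | Y s ω = optP n ∧ Y (s+1) ω ≠ optP n} with hB
  have hBnull : μ B = 0 := by
    apply measure_iUnion_null
    intro s
    exact absorb_null hk2 hkn hY s
  have hsub : {ω | Y T ω ≠ optP n} ⊆ {ω | ∀ r ≤ T, Y r ω ≠ optP n} ∪ B := by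
    intro ω hω
    by_cases hA : ∀ r ≤ T, Y r ω ≠ optP n
    · exact Or.inl hA
    · push_neg at hA
      obtain ⟨r, hr1, hr2⟩ := hA
      obtain ⟨s, _, hs2, hs3⟩ := exit_exists (Y := Y) T r hr1 hr2 hω
      exact Or.inr (Set.mem_iUnion.mpr ⟨s, hs2, hs3⟩)
  calc μ {ω | Y T ω ≠ optP n} ≤ μ ({ω | ∀ r ≤ T, Y r ω ≠ optP n} ∪ B) := measure_mono hsub
    _ ≤ μ {ω | ∀ r ≤ T, Y r ω ≠ optP n} + μ B := measure_union_le _ _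
    _ = μ {ω | ∀ r ≤ T, Y r ω ≠ optP n} := by rw [hBnull, add_zero]

lemma gap_jump_measure (t : ℕ) :
    μ {ω | (Y t ω ∈ (gapFk n k : Set (Fin n → Bool))) ∧ Y (t+1) ω = optP n}
      = ENNReal.ofReal (flt μ Y k t) := by
  classical
  have hsplit : {ω | (Y t ω ∈ (gapFk n k : Set (Fin n → Bool))) ∧ Y (t+1) ω = optP n}
      = ⋃ x ∈ gapFk n k, {ω | Y (t+1) ω = optP n ∧ Y t ω = x} := by
    ext ω
    simp only [Set.mem_setOf_eq, Set.mem_iUnion, Finset.mem_coe]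
    constructor
    · rintro ⟨h1, h2⟩; exact ⟨Y t ω, h1, h2, rfl⟩
    · rintro ⟨x, hx, h1, h2⟩; exact ⟨h2 ▸ hx, h1⟩
  have hmeas : ∀ x ∈ gapFk n k, MeasurableSet {ω | Y (t+1) ω = optP n ∧ Y t ω = x} := by
    intro x _
    have : {ω | Y (t+1) ω = optP n ∧ Y t ω = x}
        = {ω | Y (t+1) ω ∈ ({optP n} : Set _)} ∩ {ω | Y t ω ∈ ({x} : Set _)} := by
      ext ω; simp [Set.mem_setOf_eq]
    rw [this]
    exact (meas_event hY.1 (t+1) _).inter (meas_event hY.1 t _)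
  have hdisj : (↑(gapFk n k) : Set (Fin n → Bool)).PairwiseDisjoint
      (fun x => {ω | Y (t+1) ω = optP n ∧ Y t ω = x}) := by
    intro a _ b _ hab
    apply Set.disjoint_left.mpr
    rintro ω ⟨_, ha⟩ ⟨_, hb⟩
    exact hab (ha ▸ hb ▸ rfl)
  rw [hsplit, measure_biUnion_finset hdisj hmeas]
  have hterm : ∀ x ∈ gapFk n k, μ {ω | Y (t+1) ω = optP n ∧ Y t ω = x}
      = ENNReal.ofReal (stepProb n (1/(n:ℝ)) (jumpF n k) x (optP n) * rpm μ Y t x) := by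
    intro x _
    rw [hY.2 t x (optP n)]
    rw [ENNReal.ofReal_mul (stepProb_nonneg (hp0 hk2 hkn) (hp1 hk2 hkn) x (optP n))]
    congr 1
    rw [rpm, ENNReal.ofReal_toReal (measure_ne_top μ _)]
  rw [Finset.sum_congr rfl hterm, ← ENNReal.ofReal_sum_of_nonneg]
  · rfl
  · intro x _
    exact mul_nonneg (stepProb_nonneg (hp0 hk2 hkn) (hp1 hk2 hkn) x (optP n)) (rpm_nonneg t x)

lemma flux_tsum : ∑' t, ENNReal.ofReal (flt μ Y k t) ≤ ENNReal.ofReal (BBv μ Y k) := by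
  rw [ENNReal.tsum_eq_iSup_sum]
  apply iSup_le
  intro s
  obtain ⟨T, hT⟩ : ∃ T, s ⊆ Finset.range T := Finset.exists_nat_subset_range s
  calc ∑ t ∈ s, ENNReal.ofReal (flt μ Y k t)
      ≤ ∑ t ∈ Finset.range T, ENNReal.ofReal (flt μ Y k t) :=
        Finset.sum_le_sum_of_subset hT
    _ = ENNReal.ofReal (∑ t ∈ Finset.range T, flt μ Y k t) := by
        rw [ENNReal.ofReal_sum_of_nonneg]
        intro t _
        apply Finset.sum_nonneg
        intro x _
        exact mul_nonneg (stepProb_nonneg (hp0 hk2 hkn) (hp1 hk2 hkn) x (optP n))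
          (rpm_nonneg t x)
    _ ≤ ENNReal.ofReal (BBv μ Y k) := ENNReal.ofReal_le_ofReal (flux_total hk2 hkn hY T)

lemma sinf_null : μ (⋂ t : ℕ, {ω | Y t ω ∈ (gapFk n k : Set (Fin n → Bool))}) = 0 := by
  have key : ∀ ε : ℝ, 0 < ε →
      μ (⋂ t : ℕ, {ω | Y t ω ∈ (gapFk n k : Set (Fin n → Bool))}) ≤ ENNReal.ofReal ε := by
    intro ε hε
    obtain ⟨t, ht⟩ := exists_small_gap hk2 hkn hY hε
    calc μ (⋂ t : ℕ, {ω | Y t ω ∈ (gapFk n k : Set (Fin n → Bool))})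
        ≤ μ {ω | Y t ω ∈ (gapFk n k : Set (Fin n → Bool))} :=
          measure_mono (Set.iInter_subset _ t)
      _ = ENNReal.ofReal (∑ x ∈ gapFk n k, rpm μ Y t x) := by
          rw [sum_rpm_subset (μ := μ) hY.1 t (gapFk n k),
            ENNReal.ofReal_toReal (measure_ne_top μ _)]
      _ ≤ ENNReal.ofReal ε := ENNReal.ofReal_le_ofReal (le_of_lt ht)
  by_contra hcon
  have hpos : 0 < μ (⋂ t : ℕ, {ω | Y t ω ∈ (gapFk n k : Set (Fin n → Bool))}) :=
    pos_iff_ne_zero.mpr hcon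
  obtain ⟨ε, hε1, hε2⟩ : ∃ ε : ℝ, 0 < ε ∧ ENNReal.ofReal ε
      < μ (⋂ t : ℕ, {ω | Y t ω ∈ (gapFk n k : Set (Fin n → Bool))}) := by
    set a := μ (⋂ t : ℕ, {ω | Y t ω ∈ (gapFk n k : Set (Fin n → Bool))})
    have ha : a ≠ ⊤ := measure_ne_top μ _
    have hpos' : 0 < a.toReal := ENNReal.toReal_pos hcon ha
    refine ⟨a.toReal / 2, by linarith, ?_⟩
    have h2 : ENNReal.ofReal (a.toReal/2) < ENNReal.ofReal a.toReal := by
      rw [ENNReal.ofReal_lt_ofReal_iff hpos']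
      linarith
    rwa [ENNReal.ofReal_toReal ha] at h2
  exact absurd (key _ hε1) (not_le.mpr hε2)

lemma fail_bound :
    μ {ω | ∀ t, ¬ (onesCount n (Y t ω) ≤ n - k)}
      ≤ μ {ω | Y 0 ω = optP n} + ENNReal.ofReal (BBv μ Y k) := by
  classical
  set S0 : Set Ω := {ω | Y 0 ω = optP n}
  set St : ℕ → Set Ω := fun t =>
    {ω | (Y t ω ∈ (gapFk n k : Set (Fin n → Bool))) ∧ Y (t+1) ω = optP n}
  set Sinf : Set Ω := ⋂ t : ℕ, {ω | Y t ω ∈ (gapFk n k : Set (Fin n → Bool))}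
  have hgapmem : ∀ (x : Fin n → Bool), ¬(onesCount n x ≤ n - k) → x ≠ optP n →
      x ∈ (gapFk n k : Set (Fin n → Bool)) := by
    intro x h1 h2
    have hle := onesCount_le n x
    have hne : onesCount n x ≠ n := fun h => h2 ((onesCount_eq_n_iff n x).mp h)
    simp only [Finset.mem_coe, gapFk, Finset.mem_filter, Finset.mem_univ, true_and]
    omega
  have hcover : {ω | ∀ t, ¬ (onesCount n (Y t ω) ≤ n - k)} ⊆ (S0 ∪ ⋃ t, St t) ∪ Sinf := by
    intro ω hω
    simp only [Set.mem_setOf_eq] at hω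
    by_cases hinf : ∀ t, Y t ω ∈ (gapFk n k : Set (Fin n → Bool))
    · exact Or.inr (Set.mem_iInter.mpr hinf)
    · left
      push_neg at hinf
      obtain ⟨t0, ht0⟩ := hinf
      have hopt0 : Y t0 ω = optP n := by
        by_contra h
        exact ht0 (hgapmem _ (hω t0) h)
      -- there is a minimal time at the optimum
      have hex : ∃ t, Y t ω = optP n := ⟨t0, hopt0⟩
      classical
      let tm := Nat.find hex
      have htm : Y tm ω = optP n := Nat.find_spec hex
      by_cases h0 : tm = 0
      · exact Or.inl (show ω ∈ S0 by
          simp only [S0, Set.mem_setOf_eq]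
          rw [← h0]; exact htm)
      · right
        obtain ⟨s, hs⟩ : ∃ s, tm = s + 1 := ⟨tm - 1, by omega⟩
        have hsne : Y s ω ≠ optP n := Nat.find_min hex (by omega)
        refine Set.mem_iUnion.mpr ⟨s, ?_, hs ▸ htm⟩
        exact hgapmem _ (hω s) hsne
  calc μ {ω | ∀ t, ¬ (onesCount n (Y t ω) ≤ n - k)}
      ≤ μ ((S0 ∪ ⋃ t, St t) ∪ Sinf) := measure_mono hcover
    _ ≤ μ (S0 ∪ ⋃ t, St t) + μ Sinf := measure_union_le _ _
    _ = μ (S0 ∪ ⋃ t, St t) := by rw [sinf_null hk2 hkn hY, add_zero]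
    _ ≤ μ S0 + μ (⋃ t, St t) := measure_union_le _ _
    _ ≤ μ S0 + ∑' t, μ (St t) := by
        exact add_le_add (le_refl _) (measure_iUnion_le St)
    _ ≤ μ S0 + ENNReal.ofReal (BBv μ Y k) := by
        apply add_le_add (le_refl _)
        calc ∑' t, μ (St t) = ∑' t, ENNReal.ofReal (flt μ Y k t) := by
              apply tsum_congr
              intro t
              exact gap_jump_measure hk2 hkn hY t
          _ ≤ ENNReal.ofReal (BBv μ Y k) := flux_tsum hk2 hkn hY

end MeasureLevel

section MainAbstract
open MeasureTheory Filter
variable {n k : ℕ} {Ω : Type} [MeasurableSpace Ω] {μ : MeasureTheory.Measure Ω}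
  {Y : ℕ → Ω → Fin n → Bool} [MeasureTheory.IsProbabilityMeasure μ]
variable (hk2 : 2 ≤ k) (hkn : k ≤ n) (hY : IsEARun μ n (1/(n:ℝ)) (jumpF n k) Y)

include hk2 hkn

lemma BBv_nonneg : 0 ≤ BBv μ Y k := by
  apply Finset.sum_nonneg
  intro m hm
  obtain ⟨hm1, hm2⟩ := Finset.mem_Ico.mp hm
  have hd := deltaC_pos hk2 hkn (m := m) (by omega)
  have ha : 0 ≤ ∑ x ∈ AFm n m, rpm μ Y 0 x :=
    Finset.sum_nonneg (fun x _ => rpm_nonneg 0 x)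
  have hc : (0:ℝ) ≤ (1/(n:ℝ))^(n-m) := by positivity
  exact mul_nonneg hc (div_nonneg ha (le_of_lt hd))

lemma pkR_pos : 0 < pkR n k := by
  have hn : (2:ℝ) ≤ n := by exact_mod_cast hn2 hk2 hkn
  have h1 : (0:ℝ) < 1/(n:ℝ) := by positivity
  have h2 : (0:ℝ) < 1 - 1/(n:ℝ) := lt_of_lt_of_le h1 (hphalf hk2 hkn)
  have h3 : (0:ℝ) < (n:ℝ) := by linarith
  rw [pkR]
  positivity

include hY

lemma u_toReal (t : ℕ) : (μ {ω | Y t ω ≠ optP n}).toReal = 1 - rpm μ Y t (optP n) := by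
  have hcomp : {ω | Y t ω ≠ optP n} = {ω | Y t ω ∈ ({optP n} : Set (Fin n → Bool))}ᶜ := by
    ext ω; simp
  rw [hcomp, prob_compl_eq_one_sub (meas_event hY.1 t _)]
  rw [ENNReal.toReal_sub_of_le prob_le_one ENNReal.one_ne_top]
  rfl

lemma u_ofReal (t : ℕ) :
    ENNReal.ofReal (1 - rpm μ Y t (optP n)) = μ {ω | Y t ω ≠ optP n} := by
  rw [← u_toReal hk2 hkn hY t, ENNReal.ofReal_toReal (measure_ne_top μ _)]

lemma hit_bound {b c : ℝ} (hb : BBv μ Y k ≤ b) (hc0 : 0 ≤ c)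
    (hc : μ {ω | Y 0 ω = optP n} ≤ ENNReal.ofReal c) :
    ENNReal.ofReal (1 - (c + b)) ≤ μ {ω | ∃ t : ℕ, onesCount n (Y t ω) ≤ n - k} := by
  have hb0 : 0 ≤ b := le_trans (BBv_nonneg (μ := μ) (Y := Y) hk2 hkn) hb
  set E := {ω | ∃ t : ℕ, onesCount n (Y t ω) ≤ n - k} with hE
  have hEm : MeasurableSet E := by
    have h : E = ⋃ t, {ω | Y t ω ∈ {x : Fin n → Bool | onesCount n x ≤ n - k}} := by
      ext ω; simp [hE, Set.mem_setOf_eq]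
    rw [h]
    exact MeasurableSet.iUnion (fun t => meas_event hY.1 t _)
  have hcompl : μ Eᶜ ≤ ENNReal.ofReal (c + b) := by
    have hEc : Eᶜ = {ω | ∀ t, ¬ (onesCount n (Y t ω) ≤ n - k)} := by
      ext ω; simp [hE, Set.mem_setOf_eq]
    rw [hEc]
    calc μ {ω | ∀ t, ¬ (onesCount n (Y t ω) ≤ n - k)}
        ≤ μ {ω | Y 0 ω = optP n} + ENNReal.ofReal (BBv μ Y k) := fail_bound hk2 hkn hY
      _ ≤ ENNReal.ofReal c + ENNReal.ofReal b :=
          add_le_add hc (ENNReal.ofReal_le_ofReal hb)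
      _ = ENNReal.ofReal (c + b) := (ENNReal.ofReal_add hc0 hb0).symm
  have hcompl_eq : μ Eᶜ = 1 - μ E := prob_compl_eq_one_sub hEm
  have hrecover : μ E = 1 - μ Eᶜ := by
    rw [hcompl_eq, ENNReal.sub_sub_cancel ENNReal.one_ne_top prob_le_one]
  rw [hrecover]
  calc ENNReal.ofReal (1 - (c + b)) = 1 - ENNReal.ofReal (c + b) := by
        rw [ENNReal.ofReal_sub 1 (by linarith), ENNReal.ofReal_one]
    _ ≤ 1 - μ Eᶜ := tsub_le_tsub_left hcompl 1

lemma runtime_bound {b : ℝ} (hb : BBv μ Y k ≤ b) :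
    ENNReal.ofReal ((1 - rpm μ Y 0 (optP n) - b) / pkR n k)
      ≤ ∑' t : ℕ, μ {ω | ∀ r ≤ t, Y r ω ≠ optP n} := by
  by_cases hS : (∑' t : ℕ, μ {ω | ∀ r ≤ t, Y r ω ≠ optP n}) = ⊤
  · rw [hS]; exact le_top
  have hpk := pkR_pos hk2 hkn
  have hune : ∀ t, ENNReal.ofReal (1 - rpm μ Y t (optP n))
      ≤ μ {ω | ∀ r ≤ t, Y r ω ≠ optP n} := by
    intro t
    rw [u_ofReal hk2 hkn hY t]
    exact neq_le hk2 hkn hY t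
  have hu01 : ∀ t, 0 ≤ 1 - rpm μ Y t (optP n) :=
    fun t => by have := rpm_le_one (μ := μ) (Y := Y) hY.1 t (optP n); linarith
  have hperT : ∀ T, ENNReal.ofReal
      ((1 - rpm μ Y 0 (optP n) - (1 - rpm μ Y T (optP n)) - b) / pkR n k)
        ≤ ∑' t : ℕ, μ {ω | ∀ r ≤ t, Y r ω ≠ optP n} := by
    intro T
    have htel := telescope hk2 hkn hY T
    have hflux := flux_total hk2 hkn hY T
    have hreal : (1 - rpm μ Y 0 (optP n) - (1 - rpm μ Y T (optP n)) - b) / pkR n k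
        ≤ ∑ t ∈ Finset.range T, (1 - rpm μ Y t (optP n)) := by
      rw [div_le_iff₀ hpk]
      have hbF : ∑ t ∈ Finset.range T, flt μ Y k t ≤ b := le_trans hflux hb
      calc 1 - rpm μ Y 0 (optP n) - (1 - rpm μ Y T (optP n)) - b
          ≤ 1 - rpm μ Y 0 (optP n) - (1 - rpm μ Y T (optP n))
            - ∑ t ∈ Finset.range T, flt μ Y k t := by linarith
        _ ≤ pkR n k * ∑ t ∈ Finset.range T, (1 - rpm μ Y t (optP n)) := htel
        _ = (∑ t ∈ Finset.range T, (1 - rpm μ Y t (optP n))) * pkR n k := mul_comm _ _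
    calc ENNReal.ofReal ((1 - rpm μ Y 0 (optP n) - (1 - rpm μ Y T (optP n)) - b) / pkR n k)
        ≤ ENNReal.ofReal (∑ t ∈ Finset.range T, (1 - rpm μ Y t (optP n))) :=
          ENNReal.ofReal_le_ofReal hreal
      _ = ∑ t ∈ Finset.range T, ENNReal.ofReal (1 - rpm μ Y t (optP n)) :=
          ENNReal.ofReal_sum_of_nonneg (fun t _ => hu01 t)
      _ ≤ ∑ t ∈ Finset.range T, μ {ω | ∀ r ≤ t, Y r ω ≠ optP n} :=
          Finset.sum_le_sum (fun t _ => hune t)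
      _ ≤ ∑' t : ℕ, μ {ω | ∀ r ≤ t, Y r ω ≠ optP n} := ENNReal.sum_le_tsum _
  have hu : Tendsto (fun T => 1 - rpm μ Y T (optP n)) atTop (nhds 0) := by
    have hterm := ENNReal.tendsto_atTop_zero_of_tsum_ne_top hS
    have h2 : Tendsto (fun T => (μ {ω | ∀ r ≤ T, Y r ω ≠ optP n}).toReal) atTop (nhds 0) := by
      have := (ENNReal.tendsto_toReal (by simp : (0:ℝ≥0∞) ≠ ⊤)).comp hterm
      exact this
    apply tendsto_of_tendsto_of_tendsto_of_le_of_le tendsto_const_nhds h2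
    · exact fun t => hu01 t
    · intro t
      show 1 - rpm μ Y t (optP n) ≤ (μ {ω | ∀ r ≤ t, Y r ω ≠ optP n}).toReal
      rw [← u_toReal hk2 hkn hY t]
      exact ENNReal.toReal_mono (measure_ne_top μ _) (neq_le hk2 hkn hY t)
  have hlim : Tendsto (fun T => ENNReal.ofReal
      ((1 - rpm μ Y 0 (optP n) - (1 - rpm μ Y T (optP n)) - b) / pkR n k)) atTop
      (nhds (ENNReal.ofReal ((1 - rpm μ Y 0 (optP n) - b) / pkR n k))) := by
    apply (ENNReal.continuous_ofReal.tendsto _).comp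
    have h3 : Tendsto (fun T => 1 - rpm μ Y 0 (optP n) - (1 - rpm μ Y T (optP n)) - b)
        atTop (nhds (1 - rpm μ Y 0 (optP n) - 0 - b)) :=
      (((tendsto_const_nhds).sub hu).sub tendsto_const_nhds)
    rw [sub_zero] at h3
    exact h3.div_const _
  exact le_of_tendsto' hlim hperT

end MainAbstract

section Arith
open Finset
variable {n k : ℕ}

lemma third_le (hn : 2 ≤ n) : (1/3:ℝ) ≤ (1 - 1/(n:ℝ))^(n-1) := by
  have hn1 : (1:ℝ) ≤ (n:ℝ) - 1 := by
    have : (2:ℝ) ≤ (n:ℝ) := by exact_mod_cast hn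
    linarith
  have hq : (0:ℝ) < (n:ℝ) - 1 := by linarith
  have hn0 : (0:ℝ) < (n:ℝ) := by linarith
  have hrw : (1 - 1/(n:ℝ)) = ((n:ℝ)-1)/n := by field_simp
  have key : ((n:ℝ)/((n:ℝ)-1))^(n-1) ≤ 3 := by
    have h1 : (n:ℝ)/((n:ℝ)-1) = 1 + 1/((n:ℝ)-1) := by field_simp; ring
    rw [h1]
    have h2 : (1 + 1/((n:ℝ)-1)) ≤ Real.exp (1/((n:ℝ)-1)) := by
      have := Real.add_one_le_exp (1/((n:ℝ)-1)); linarith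
    calc (1 + 1/((n:ℝ)-1))^(n-1) ≤ (Real.exp (1/((n:ℝ)-1)))^(n-1) :=
        pow_le_pow_left₀ (by positivity) h2 _
      _ = Real.exp (((n-1:ℕ):ℝ) * (1/((n:ℝ)-1))) := by rw [Real.exp_nat_mul]
      _ = Real.exp 1 := by
          congr 1
          have hcast : ((n-1:ℕ):ℝ) = (n:ℝ) - 1 := by
            have : 1 ≤ n := by omega
            push_cast [this]; ring
          rw [hcast]
          field_simp
      _ ≤ 3 := by
          have := Real.exp_one_lt_d9; linarith
  have hpos : (0:ℝ) < ((n:ℝ)/((n:ℝ)-1))^(n-1) := by positivity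
  rw [hrw]
  have hinv : (((n:ℝ)-1)/n)^(n-1) = (((n:ℝ)/((n:ℝ)-1))^(n-1))⁻¹ := by
    rw [← inv_pow]
    congr 1
    rw [inv_div]
  rw [hinv]
  rw [le_inv_comm₀ (by norm_num) hpos]
  calc ((n:ℝ)/((n:ℝ)-1))^(n-1) ≤ 3 := key
    _ = (1/3:ℝ)⁻¹ := by norm_num

lemma deltaC_ge (hn : 2 ≤ n) {m : ℕ} : (m:ℝ)/(3*(n:ℝ)) ≤ deltaC n m := by
  have hn0 : (0:ℝ) < (n:ℝ) := by exact_mod_cast (by omega : 0 < n)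
  have h3 := third_le (n := n) hn
  have hm0 : (0:ℝ) ≤ (m:ℝ) := by positivity
  rw [deltaC]
  calc (m:ℝ)/(3*(n:ℝ)) = (m:ℝ) * ((1/(n:ℝ)) * (1/3)) := by ring
    _ ≤ (m:ℝ) * ((1/(n:ℝ)) * (1 - 1/(n:ℝ))^(n-1)) := by
        apply mul_le_mul_of_nonneg_left _ hm0
        apply mul_le_mul_of_nonneg_left h3 (by positivity)

lemma gsum (hn : 2 ≤ n) (a b : ℕ) : ∑ j ∈ Finset.Ico a b, ((1:ℝ)/n)^j ≤ 2*((1:ℝ)/n)^a := by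
  have hn2 : (2:ℝ) ≤ (n:ℝ) := by exact_mod_cast hn
  have hn0 : (0:ℝ) < (n:ℝ) := by linarith
  have hterm : ∀ j ∈ Finset.Ico a b, ((1:ℝ)/n)^j ≤ ((1:ℝ)/n)^a * ((1:ℝ)/2)^(j-a) := by
    intro j hj
    obtain ⟨hj1, _⟩ := Finset.mem_Ico.mp hj
    have hj' : j = a + (j - a) := by omega
    calc ((1:ℝ)/n)^j = ((1:ℝ)/n)^a * ((1:ℝ)/n)^(j-a) := by rw [← pow_add, ← hj']
      _ ≤ ((1:ℝ)/n)^a * ((1:ℝ)/2)^(j-a) := by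
          apply mul_le_mul_of_nonneg_left _ (by positivity)
          apply pow_le_pow_left₀ (by positivity)
          rw [div_le_div_iff₀ hn0 (by norm_num)]
          linarith
  calc ∑ j ∈ Finset.Ico a b, ((1:ℝ)/n)^j
      ≤ ∑ j ∈ Finset.Ico a b, ((1:ℝ)/n)^a * ((1:ℝ)/2)^(j-a) := Finset.sum_le_sum hterm
    _ = ((1:ℝ)/n)^a * ∑ j ∈ Finset.Ico a b, ((1:ℝ)/2)^(j-a) := by rw [Finset.mul_sum]
    _ ≤ ((1:ℝ)/n)^a * 2 := by
        apply mul_le_mul_of_nonneg_left _ (by positivity)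
        rw [Finset.sum_Ico_eq_sum_range]
        have : ∀ i ∈ Finset.range (b - a), ((1:ℝ)/2)^(a + i - a) = ((1:ℝ)/2)^i := by
          intro i _; congr 1; omega
        rw [Finset.sum_congr rfl this]
        exact sum_geometric_two_le _
    _ = 2*((1:ℝ)/n)^a := by ring

lemma sum_bound1 (hk2 : 2 ≤ k) (hkn : k ≤ n) :
    ∑ m ∈ Finset.Ico (n-k+1) n, (1/(n:ℝ))^(n-m) * (3*(n:ℝ)/m) ≤ 12/(n:ℝ) := by
  have hn : 2 ≤ n := le_trans hk2 hkn
  have hn2 : (2:ℝ) ≤ (n:ℝ) := by exact_mod_cast hn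
  have hn0 : (0:ℝ) < (n:ℝ) := by linarith
  have hre : ∑ m ∈ Finset.Ico (n-k+1) n, (1/(n:ℝ))^(n-m) * (3*(n:ℝ)/m)
      = ∑ j ∈ Finset.Ico 1 k, (1/(n:ℝ))^j * (3*(n:ℝ)/((n-j:ℕ):ℝ)) := by
    apply Finset.sum_nbij' (fun m => n - m) (fun j => n - j)
    · intro m hm; obtain ⟨h1, h2⟩ := Finset.mem_Ico.mp hm; rw [Finset.mem_Ico]; omega
    · intro j hj; obtain ⟨h1, h2⟩ := Finset.mem_Ico.mp hj; rw [Finset.mem_Ico]; omega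
    · intro m hm; obtain ⟨h1, h2⟩ := Finset.mem_Ico.mp hm; omega
    · intro j hj; obtain ⟨h1, h2⟩ := Finset.mem_Ico.mp hj; omega
    · intro m hm
      obtain ⟨h1, h2⟩ := Finset.mem_Ico.mp hm
      have : n - (n - m) = m := by omega
      rw [this]
  rw [hre]
  have hsplit := Finset.sum_Ico_consecutive (fun j => (1/(n:ℝ))^j * (3*(n:ℝ)/((n-j:ℕ):ℝ)))
    (by omega : 1 ≤ 2) (by omega : 2 ≤ k)
  rw [← hsplit]
  have hcast : ((n-1:ℕ):ℝ) = (n:ℝ) - 1 := by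
    have : 1 ≤ n := by omega
    push_cast [this]; ring
  have h1 : ∑ j ∈ Finset.Ico 1 2, (1/(n:ℝ))^j * (3*(n:ℝ)/((n-j:ℕ):ℝ)) ≤ 6/(n:ℝ) := by
    rw [show Finset.Ico 1 2 = ({1} : Finset ℕ) by decide, Finset.sum_singleton]
    rw [pow_one, hcast]
    have he : (1/(n:ℝ)) * (3*(n:ℝ)/((n:ℝ)-1)) = 3/((n:ℝ)-1) := by
      field_simp
    rw [he, div_le_div_iff₀ (by linarith) hn0]
    linarith
  have h2 : ∑ j ∈ Finset.Ico 2 k, (1/(n:ℝ))^j * (3*(n:ℝ)/((n-j:ℕ):ℝ)) ≤ 6/(n:ℝ) := by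
    have hterm : ∀ j ∈ Finset.Ico 2 k, (1/(n:ℝ))^j * (3*(n:ℝ)/((n-j:ℕ):ℝ))
        ≤ (3*(n:ℝ)) * (1/(n:ℝ))^j := by
      intro j hj
      obtain ⟨hj1, hj2⟩ := Finset.mem_Ico.mp hj
      have hd1 : (1:ℝ) ≤ ((n-j:ℕ):ℝ) := by exact_mod_cast (by omega : 1 ≤ n - j)
      have hfrac : 3*(n:ℝ)/((n-j:ℕ):ℝ) ≤ 3*(n:ℝ) := by
        calc 3*(n:ℝ)/((n-j:ℕ):ℝ) ≤ 3*(n:ℝ)/1 :=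
          div_le_div_of_nonneg_left (by linarith) (by norm_num) hd1
        _ = 3*(n:ℝ) := by ring
      calc (1/(n:ℝ))^j * (3*(n:ℝ)/((n-j:ℕ):ℝ)) ≤ (1/(n:ℝ))^j * (3*(n:ℝ)) :=
          mul_le_mul_of_nonneg_left hfrac (by positivity)
        _ = (3*(n:ℝ)) * (1/(n:ℝ))^j := by ring
    calc ∑ j ∈ Finset.Ico 2 k, (1/(n:ℝ))^j * (3*(n:ℝ)/((n-j:ℕ):ℝ))
        ≤ ∑ j ∈ Finset.Ico 2 k, (3*(n:ℝ)) * (1/(n:ℝ))^j := Finset.sum_le_sum hterm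
      _ = (3*(n:ℝ)) * ∑ j ∈ Finset.Ico 2 k, (1/(n:ℝ))^j := by rw [Finset.mul_sum]
      _ ≤ (3*(n:ℝ)) * (2*((1:ℝ)/n)^2) := by
          apply mul_le_mul_of_nonneg_left (gsum hn 2 k) (by positivity)
      _ = 6/(n:ℝ) := by field_simp; ring
  calc ∑ j ∈ Finset.Ico 1 2, (1/(n:ℝ))^j * (3*(n:ℝ)/((n-j:ℕ):ℝ))
        + ∑ j ∈ Finset.Ico 2 k, (1/(n:ℝ))^j * (3*(n:ℝ)/((n-j:ℕ):ℝ))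
      ≤ 6/(n:ℝ) + 6/(n:ℝ) := add_le_add h1 h2
    _ = 12/(n:ℝ) := by ring

end Arith

section Arith2
open Finset
variable {n k : ℕ}

lemma card_lvlF (m : ℕ) : (lvlF n m).card = n.choose m := by
  classical
  have h : (lvlF n m).card = (Finset.powersetCard m (Finset.univ : Finset (Fin n))).card := by
    apply Finset.card_bij (fun x _ => Finset.univ.filter fun i => x i = true)
    · intro x hx
      rw [Finset.mem_powersetCard_univ]
      exact (Finset.mem_filter.mp hx).2
    · intro x hx y hy hxy
      funext i
      have h2 := Finset.ext_iff.mp hxy i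
      simp only [Finset.mem_filter, Finset.mem_univ, true_and] at h2
      cases hxi : x i <;> cases hyi : y i <;> simp_all
    · intro s hs
      refine ⟨fun i => decide (i ∈ s), ?_, ?_⟩
      · rw [lvlF, Finset.mem_filter]
        refine ⟨Finset.mem_univ _, ?_⟩
        rw [Finset.mem_powersetCard_univ] at hs
        rw [onesCount, ← hs]
        congr 1
        ext i
        simp
      · ext i; simp
  rw [h, Finset.card_powersetCard, Finset.card_univ, Fintype.card_fin]

lemma card_AFm (m : ℕ) : (AFm n m).card = ∑ m' ∈ Finset.Ico m n, n.choose m' := by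
  classical
  rw [Finset.card_eq_sum_card_fiberwise (f := fun x => onesCount n x) (t := Finset.Ico m n)
    (fun x hx => by
      obtain ⟨-, h1, h2⟩ := Finset.mem_filter.mp hx
      rw [Finset.mem_coe, Finset.mem_Ico]; exact ⟨h1, h2⟩)]
  apply Finset.sum_congr rfl
  intro m' hm'
  obtain ⟨h1, h2⟩ := Finset.mem_Ico.mp hm'
  have h : (AFm n m).filter (fun x => onesCount n x = m') = lvlF n m' := by
    ext x
    simp only [AFm, lvlF, Finset.mem_filter, Finset.mem_univ, true_and]
    constructor
    · tauto
    · intro h; exact ⟨⟨by omega, by omega⟩, h⟩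
  rw [h, card_lvlF]

lemma choose_mono_half {j' j : ℕ} (h1 : j' ≤ j) (h2 : 2*j ≤ n) :
    n.choose j' ≤ n.choose j := by
  induction j with
  | zero =>
    have : j' = 0 := by omega
    rw [this]
  | succ j ih =>
    rcases Nat.lt_or_ge j' (j+1) with h | h
    · have hj' : j' ≤ j := by omega
      have hih := ih hj' (by omega)
      have hstep : n.choose j ≤ n.choose (j+1) :=
        Nat.choose_le_succ_of_lt_half_left (by omega)
      omega
    · have : j' = j+1 := by omega
      rw [this]

lemma choose_le_pow_fact (j : ℕ) : (n.choose j : ℝ) ≤ (n:ℝ)^j / (j.factorial : ℝ) := by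
  have hf : (0:ℝ) < (j.factorial : ℝ) := by exact_mod_cast j.factorial_pos
  rw [le_div_iff₀ hf]
  have h := Nat.descFactorial_le_pow n j
  rw [Nat.descFactorial_eq_factorial_mul_choose] at h
  calc (n.choose j : ℝ) * (j.factorial : ℝ) = ((j.factorial * n.choose j : ℕ) : ℝ) := by
        push_cast; ring
    _ ≤ ((n^j : ℕ):ℝ) := by exact_mod_cast h
    _ = (n:ℝ)^j := by push_cast; rfl

lemma fact_two_pow : ∀ i : ℕ, 2^(i-1) ≤ i.factorial := by
  intro i
  induction i with
  | zero => simp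
  | succ i ih =>
    cases i with
    | zero => simp
    | succ i' =>
      have h1 : i' + 1 + 1 - 1 = i' + 1 := by omega
      have h2 : i' + 1 - 1 = i' := by omega
      rw [h1]
      rw [h2] at ih
      calc 2^(i'+1) = 2 * 2^i' := by ring
        _ ≤ 2 * (i'+1).factorial := by omega
        _ ≤ (i'+2) * (i'+1).factorial := by
            have : (i'+1).factorial > 0 := Nat.factorial_pos _
            nlinarith
        _ = (i'+1+1).factorial := (Nat.factorial_succ (i'+1)).symm

lemma sum_inv_fact (N : ℕ) : ∑ i ∈ Finset.range N, (1/(i.factorial:ℝ)) ≤ 4 := by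
  have hterm : ∀ i ∈ Finset.range N, (1/(i.factorial:ℝ)) ≤ 2*(1/2:ℝ)^i := by
    intro i _
    have h2 : (2:ℝ)^(i-1) ≤ (i.factorial:ℝ) := by exact_mod_cast fact_two_pow i
    have h3 : (2:ℝ)^i ≤ 2*(i.factorial:ℝ) := by
      have h4 : (2:ℝ)^i ≤ 2 * (2:ℝ)^(i-1) := by
        cases i with
        | zero => norm_num
        | succ i' =>
          have : i' + 1 - 1 = i' := by omega
          rw [this, pow_succ]
          linarith [pow_nonneg (by norm_num : (0:ℝ) ≤ 2) i']
      linarith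
    have hfp : (0:ℝ) < (i.factorial:ℝ) := by exact_mod_cast i.factorial_pos
    rw [div_le_iff₀ hfp]
    have hhp : (1/2:ℝ)^i = ((2:ℝ)^i)⁻¹ := by
      rw [div_pow, one_pow, one_div]
    rw [hhp]
    have h2i : (0:ℝ) < (2:ℝ)^i := by positivity
    have heq : (2*((2:ℝ)^i)⁻¹) * (i.factorial:ℝ) = 2*(i.factorial:ℝ)/(2:ℝ)^i := by
      field_simp
    rw [heq, le_div_iff₀ h2i]
    linarith
  calc ∑ i ∈ Finset.range N, (1/(i.factorial:ℝ))
      ≤ ∑ i ∈ Finset.range N, 2*(1/2:ℝ)^i := Finset.sum_le_sum hterm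
    _ = 2 * ∑ i ∈ Finset.range N, (1/2:ℝ)^i := by rw [Finset.mul_sum]
    _ ≤ 2 * 2 := by
        have := sum_geometric_two_le N
        linarith
    _ = 4 := by norm_num

lemma four_pow_le : ∀ n : ℕ, 2 ≤ n → (4:ℝ)^n ≤ 36*(n:ℝ)^(n-1) := by
  intro n hn
  induction n, hn using Nat.le_induction with
  | base => norm_num
  | succ n hn ih =>
    have hn0 : (0:ℝ) < (n:ℝ) := by exact_mod_cast (by omega : 0 < n)
    have hbern : (2:ℝ) ≤ (1+1/(n:ℝ))^n := by
      have h0' : (0:ℝ) ≤ 1/(n:ℝ) := by positivity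
      have ha : (-2:ℝ) ≤ 1/(n:ℝ) := by linarith
      have h2 : (n:ℝ) * (1/(n:ℝ)) = 1 := by field_simp
      calc (2:ℝ) = 1 + (n:ℝ)*(1/(n:ℝ)) := by rw [h2]; norm_num
        _ ≤ (1+1/(n:ℝ))^n := one_add_mul_le_pow ha n
    have hpow : ((n:ℝ)+1)^n = (n:ℝ)^n * (1+1/(n:ℝ))^n := by
      rw [← mul_pow]
      congr 1
      field_simp
    have hnn : (n:ℝ)^n = (n:ℝ) * (n:ℝ)^(n-1) := by
      have h1 : n = 1 + (n-1) := by omega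
      calc (n:ℝ)^n = (n:ℝ)^(1+(n-1)) := by rw [← h1]
        _ = (n:ℝ) * (n:ℝ)^(n-1) := by rw [pow_add, pow_one]
    have hkey : 4*(n:ℝ)^(n-1) ≤ ((n:ℝ)+1)^n := by
      calc 4*(n:ℝ)^(n-1) ≤ 2*(n:ℝ) * (n:ℝ)^(n-1) := by
            have h2n : (2:ℝ) ≤ (n:ℝ) := by exact_mod_cast hn
            have := pow_nonneg hn0.le (n-1)
            nlinarith
        _ = (n:ℝ)^n * 2 := by rw [hnn]; ring
        _ ≤ (n:ℝ)^n * (1+1/(n:ℝ))^n := by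
            apply mul_le_mul_of_nonneg_left hbern (pow_nonneg hn0.le n)
        _ = ((n:ℝ)+1)^n := hpow.symm
    have hstep : (4:ℝ)^(n+1) = 4 * 4^n := by ring
    calc (4:ℝ)^(n+1) = 4 * 4^n := hstep
      _ ≤ 4 * (36*(n:ℝ)^(n-1)) := by
          have := ih
          nlinarith [pow_nonneg (by norm_num : (0:ℝ) ≤ 4) n]
      _ = 36 * (4*(n:ℝ)^(n-1)) := by ring
      _ ≤ 36 * ((n:ℝ)+1)^n := by nlinarith [hkey]
      _ = 36 * ((n+1:ℕ):ℝ)^((n+1)-1) := by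
          push_cast
          norm_num

lemma two_pow_le_half (hn : 2 ≤ n) : (2:ℝ)^n ≤ 6*(n:ℝ)^(n/2) := by
  have hn1 : (1:ℝ) ≤ (n:ℝ) := by exact_mod_cast (by omega : 1 ≤ n)
  have h4 := four_pow_le n hn
  have hexp : (n:ℝ)^(n-1) ≤ (n:ℝ)^(2*(n/2)) := pow_le_pow_right₀ hn1 (by omega)
  have hsq : ((2:ℝ)^n)^2 ≤ (6*(n:ℝ)^(n/2))^2 := by
    calc ((2:ℝ)^n)^2 = (4:ℝ)^n := by
          rw [← pow_mul, mul_comm, pow_mul]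
          norm_num
      _ ≤ 36*(n:ℝ)^(n-1) := h4
      _ ≤ 36*(n:ℝ)^(2*(n/2)) := by
          apply mul_le_mul_of_nonneg_left hexp (by norm_num)
      _ = (6*(n:ℝ)^(n/2))^2 := by
          rw [mul_pow, ← pow_mul]
          norm_num
          ring_nf
  exact (pow_le_pow_iff_left₀ (by positivity) (by positivity) (by norm_num)).mp hsq

lemma sum_bound2 (hk2 : 2 ≤ k) (hkn : k ≤ n) :
    ∑ j ∈ Finset.Ico 1 k, (1/(n:ℝ))^j * (3*(n:ℝ)/((n-j:ℕ):ℝ))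
        * (∑ j' ∈ Finset.Ico 1 (j+1), (n.choose j' : ℝ)) ≤ 60 := by
  have hn : 2 ≤ n := le_trans hk2 hkn
  have hn2 : (2:ℝ) ≤ (n:ℝ) := by exact_mod_cast hn
  have hn0 : (0:ℝ) < (n:ℝ) := by linarith
  -- bound for terms with 2*j ≤ n
  have hsmall : ∀ j, 1 ≤ j → j < k → 2*j ≤ n →
      (1/(n:ℝ))^j * (3*(n:ℝ)/((n-j:ℕ):ℝ)) * (∑ j' ∈ Finset.Ico 1 (j+1), (n.choose j' : ℝ))
        ≤ 6 * (1/((j-1).factorial:ℝ)) := by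
    intro j hj1 hjk hjn
    have hU : (∑ j' ∈ Finset.Ico 1 (j+1), (n.choose j' : ℝ)) ≤ (j:ℝ) * ((n:ℝ)^j / (j.factorial:ℝ)) := by
      have hcj : (n.choose j : ℝ) ≤ (n:ℝ)^j / (j.factorial:ℝ) := choose_le_pow_fact j
      calc ∑ j' ∈ Finset.Ico 1 (j+1), (n.choose j' : ℝ)
          ≤ ∑ j' ∈ Finset.Ico 1 (j+1), ((n:ℝ)^j / (j.factorial:ℝ)) := by
            apply Finset.sum_le_sum
            intro j' hj'
            obtain ⟨h1, h2⟩ := Finset.mem_Ico.mp hj'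
            calc (n.choose j' : ℝ) ≤ (n.choose j : ℝ) := by
                  exact_mod_cast choose_mono_half (by omega) hjn
              _ ≤ (n:ℝ)^j / (j.factorial:ℝ) := hcj
        _ = (j:ℝ) * ((n:ℝ)^j / (j.factorial:ℝ)) := by
            rw [Finset.sum_const, Nat.card_Ico]
            have : j + 1 - 1 = j := by omega
            rw [this, nsmul_eq_mul]
    have hfrac : 3*(n:ℝ)/((n-j:ℕ):ℝ) ≤ 6 := by
      have hcast : ((n-j:ℕ):ℝ) = (n:ℝ) - (j:ℝ) := by
        have : j ≤ n := by omega
        push_cast [this]; ring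
      rw [hcast]
      have hjr : 2*(j:ℝ) ≤ (n:ℝ) := by exact_mod_cast hjn
      rw [div_le_iff₀ (by linarith)]
      linarith
    have hUnn : (0:ℝ) ≤ ∑ j' ∈ Finset.Ico 1 (j+1), (n.choose j' : ℝ) :=
      Finset.sum_nonneg (fun j' _ => by positivity)
    have hfactj : (j.factorial : ℝ) = (j:ℝ) * ((j-1).factorial : ℝ) := by
      have h1 : j = (j-1) + 1 := by omega
      rw [h1, Nat.factorial_succ]
      push_cast
      ring
    calc (1/(n:ℝ))^j * (3*(n:ℝ)/((n-j:ℕ):ℝ)) * (∑ j' ∈ Finset.Ico 1 (j+1), (n.choose j' : ℝ))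
        ≤ (1/(n:ℝ))^j * 6 * ((j:ℝ) * ((n:ℝ)^j / (j.factorial:ℝ))) := by
          apply mul_le_mul (mul_le_mul_of_nonneg_left hfrac (by positivity)) hU hUnn
            (by positivity)
      _ = 6 * ((j:ℝ)/(j.factorial:ℝ)) * ((1/(n:ℝ))^j * (n:ℝ)^j) := by ring
      _ = 6 * (1/((j-1).factorial:ℝ)) := by
          have hp : (1/(n:ℝ))^j * (n:ℝ)^j = 1 := by
            rw [← mul_pow]
            rw [one_div_mul_cancel (ne_of_gt hn0)]
            exact one_pow j
          rw [hp, hfactj]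
          have hj0 : (0:ℝ) < (j:ℝ) := by exact_mod_cast hj1
          have hf0 : (0:ℝ) < ((j-1).factorial:ℝ) := by exact_mod_cast (j-1).factorial_pos
          field_simp
  -- bound for terms with 2*j > n
  have hlarge : ∀ j, 1 ≤ j → j < k →
      (1/(n:ℝ))^j * (3*(n:ℝ)/((n-j:ℕ):ℝ)) * (∑ j' ∈ Finset.Ico 1 (j+1), (n.choose j' : ℝ))
        ≤ (3*(n:ℝ)*(2:ℝ)^n) * (1/(n:ℝ))^j := by
    intro j hj1 hjk
    have hU2 : (∑ j' ∈ Finset.Ico 1 (j+1), (n.choose j' : ℝ)) ≤ (2:ℝ)^n := by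
      have hsub : Finset.Ico 1 (j+1) ⊆ Finset.range (n+1) := by
        intro j' hj'
        obtain ⟨h1, h2⟩ := Finset.mem_Ico.mp hj'
        rw [Finset.mem_range]
        omega
      calc ∑ j' ∈ Finset.Ico 1 (j+1), (n.choose j' : ℝ)
          ≤ ∑ j' ∈ Finset.range (n+1), (n.choose j' : ℝ) :=
            Finset.sum_le_sum_of_subset_of_nonneg hsub (fun j' _ _ => by positivity)
        _ = (2:ℝ)^n := by
            rw [← Nat.cast_sum]
            rw [Nat.sum_range_choose]
            push_cast; rfl
    have hd1 : (1:ℝ) ≤ ((n-j:ℕ):ℝ) := by exact_mod_cast (by omega : 1 ≤ n - j)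
    have hfrac : 3*(n:ℝ)/((n-j:ℕ):ℝ) ≤ 3*(n:ℝ) := by
      calc 3*(n:ℝ)/((n-j:ℕ):ℝ) ≤ 3*(n:ℝ)/1 :=
          div_le_div_of_nonneg_left (by linarith) (by norm_num) hd1
        _ = 3*(n:ℝ) := by ring
    calc (1/(n:ℝ))^j * (3*(n:ℝ)/((n-j:ℕ):ℝ)) * (∑ j' ∈ Finset.Ico 1 (j+1), (n.choose j' : ℝ))
        ≤ (1/(n:ℝ))^j * (3*(n:ℝ)) * (2:ℝ)^n := by
          apply mul_le_mul (mul_le_mul_of_nonneg_left hfrac (by positivity)) hU2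
            (Finset.sum_nonneg (fun j' _ => by positivity)) (by positivity)
      _ = (3*(n:ℝ)*(2:ℝ)^n) * (1/(n:ℝ))^j := by ring
  -- split the sum
  rcases le_or_gt k (n/2 + 1) with hcase | hcase
  · -- all terms are small
    calc ∑ j ∈ Finset.Ico 1 k, (1/(n:ℝ))^j * (3*(n:ℝ)/((n-j:ℕ):ℝ))
          * (∑ j' ∈ Finset.Ico 1 (j+1), (n.choose j' : ℝ))
        ≤ ∑ j ∈ Finset.Ico 1 k, 6 * (1/((j-1).factorial:ℝ)) := by
          apply Finset.sum_le_sum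
          intro j hj
          obtain ⟨h1, h2⟩ := Finset.mem_Ico.mp hj
          exact hsmall j h1 h2 (by omega)
      _ = 6 * ∑ j ∈ Finset.Ico 1 k, (1/((j-1).factorial:ℝ)) := by rw [Finset.mul_sum]
      _ ≤ 6 * 4 := by
          apply mul_le_mul_of_nonneg_left _ (by norm_num)
          rw [Finset.sum_Ico_eq_sum_range]
          have he : ∀ i ∈ Finset.range (k-1), (1/(((1+i)-1).factorial:ℝ)) = 1/(i.factorial:ℝ) := by
            intro i _
            have hii : 1 + i - 1 = i := by omega
            rw [hii]
          rw [Finset.sum_congr rfl he]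
          exact sum_inv_fact _
      _ ≤ 60 := by norm_num
  · -- split at n/2+1
    have hsplit := Finset.sum_Ico_consecutive
      (fun j => (1/(n:ℝ))^j * (3*(n:ℝ)/((n-j:ℕ):ℝ)) * (∑ j' ∈ Finset.Ico 1 (j+1), (n.choose j' : ℝ)))
      (by omega : 1 ≤ n/2 + 1) (by omega : n/2 + 1 ≤ k)
    rw [← hsplit]
    have hpart1 : ∑ j ∈ Finset.Ico 1 (n/2+1), (1/(n:ℝ))^j * (3*(n:ℝ)/((n-j:ℕ):ℝ))
        * (∑ j' ∈ Finset.Ico 1 (j+1), (n.choose j' : ℝ)) ≤ 24 := by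
      calc ∑ j ∈ Finset.Ico 1 (n/2+1), (1/(n:ℝ))^j * (3*(n:ℝ)/((n-j:ℕ):ℝ))
            * (∑ j' ∈ Finset.Ico 1 (j+1), (n.choose j' : ℝ))
          ≤ ∑ j ∈ Finset.Ico 1 (n/2+1), 6 * (1/((j-1).factorial:ℝ)) := by
            apply Finset.sum_le_sum
            intro j hj
            obtain ⟨h1, h2⟩ := Finset.mem_Ico.mp hj
            exact hsmall j h1 (by omega) (by omega)
        _ = 6 * ∑ j ∈ Finset.Ico 1 (n/2+1), (1/((j-1).factorial:ℝ)) := by rw [Finset.mul_sum]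
        _ ≤ 6 * 4 := by
            apply mul_le_mul_of_nonneg_left _ (by norm_num)
            rw [Finset.sum_Ico_eq_sum_range]
            have he : ∀ i ∈ Finset.range (n/2+1-1), (1/(((1+i)-1).factorial:ℝ)) = 1/(i.factorial:ℝ) := by
              intro i _
              have hii : 1 + i - 1 = i := by omega
              rw [hii]
            rw [Finset.sum_congr rfl he]
            exact sum_inv_fact _
        _ = 24 := by norm_num
    have hpart2 : ∑ j ∈ Finset.Ico (n/2+1) k, (1/(n:ℝ))^j * (3*(n:ℝ)/((n-j:ℕ):ℝ))
        * (∑ j' ∈ Finset.Ico 1 (j+1), (n.choose j' : ℝ)) ≤ 36 := by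
      calc ∑ j ∈ Finset.Ico (n/2+1) k, (1/(n:ℝ))^j * (3*(n:ℝ)/((n-j:ℕ):ℝ))
            * (∑ j' ∈ Finset.Ico 1 (j+1), (n.choose j' : ℝ))
          ≤ ∑ j ∈ Finset.Ico (n/2+1) k, (3*(n:ℝ)*(2:ℝ)^n) * (1/(n:ℝ))^j := by
            apply Finset.sum_le_sum
            intro j hj
            obtain ⟨h1, h2⟩ := Finset.mem_Ico.mp hj
            exact hlarge j (by omega) h2
        _ = (3*(n:ℝ)*(2:ℝ)^n) * ∑ j ∈ Finset.Ico (n/2+1) k, (1/(n:ℝ))^j := by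
            rw [Finset.mul_sum]
        _ ≤ (3*(n:ℝ)*(2:ℝ)^n) * (2*((1:ℝ)/n)^(n/2+1)) := by
            apply mul_le_mul_of_nonneg_left (gsum hn (n/2+1) k) (by positivity)
        _ = 6 * ((2:ℝ)^n * ((1:ℝ)/n)^(n/2)) := by
            rw [pow_succ]
            field_simp
            ring
        _ ≤ 6 * 6 := by
            apply mul_le_mul_of_nonneg_left _ (by norm_num)
            have h2p := two_pow_le_half (n := n) hn
            have hnp : (0:ℝ) < (n:ℝ)^(n/2) := by positivity
            have hinv : ((1:ℝ)/n)^(n/2) = ((n:ℝ)^(n/2))⁻¹ := by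
              rw [div_pow, one_pow, one_div]
            rw [hinv]
            rw [mul_inv_le_iff₀ hnp]
            linarith
        _ = 36 := by norm_num
    linarith
end Arith2

section Final
open MeasureTheory
variable {n k : ℕ} {Ω : Type} [MeasurableSpace Ω] {μ : MeasureTheory.Measure Ω}
  {Y : ℕ → Ω → Fin n → Bool} [MeasureTheory.IsProbabilityMeasure μ]
variable (hk2 : 2 ≤ k) (hkn : k ≤ n) (hY : IsEARun μ n (1/(n:ℝ)) (jumpF n k) Y)

include hk2 hkn hY

lemma invdelta_le {m : ℕ} (hm0 : 1 ≤ m) : 1 / deltaC n m ≤ 3*(n:ℝ)/m := by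
  have hn : 2 ≤ n := le_trans hk2 hkn
  have hn0 : (0:ℝ) < (n:ℝ) := by exact_mod_cast (by omega : 0 < n)
  have hm0' : (0:ℝ) < (m:ℝ) := by exact_mod_cast hm0
  have hq : (0:ℝ) < (m:ℝ)/(3*(n:ℝ)) := by positivity
  have h := one_div_le_one_div_of_le hq (deltaC_ge hn (m := m))
  rwa [one_div_div] at h

lemma BBv_le1 : BBv μ Y k ≤ 12/(n:ℝ) := by
  have hn : 2 ≤ n := le_trans hk2 hkn
  calc BBv μ Y k ≤ ∑ m ∈ Finset.Ico (n-k+1) n, (1/(n:ℝ))^(n-m) * (3*(n:ℝ)/m) := by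
        apply Finset.sum_le_sum
        intro m hm
        obtain ⟨hm1, hm2⟩ := Finset.mem_Ico.mp hm
        have hm0 : 1 ≤ m := by omega
        have hdpos := deltaC_pos hk2 hkn (m := m) hm0
        have ha1 : ∑ x ∈ AFm n m, rpm μ Y 0 x ≤ 1 := by
          rw [← sum_rpm_one (μ := μ) (Y := Y) hY.1 0]
          exact Finset.sum_le_sum_of_subset_of_nonneg (Finset.subset_univ _)
            (fun x _ _ => rpm_nonneg 0 x)
        apply mul_le_mul_of_nonneg_left _ (by positivity)
        calc (∑ x ∈ AFm n m, rpm μ Y 0 x) / deltaC n m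
            ≤ 1 / deltaC n m := by gcongr
          _ ≤ 3*(n:ℝ)/m := invdelta_le hk2 hkn hY hm0
    _ ≤ 12/(n:ℝ) := sum_bound1 hk2 hkn

lemma BBv_le2 (huni : ∀ x : Fin n → Bool, rpm μ Y 0 x = ((2:ℝ)^n)⁻¹) :
    BBv μ Y k ≤ 60/(2:ℝ)^n := by
  have hn : 2 ≤ n := le_trans hk2 hkn
  have hn0 : (0:ℝ) < (n:ℝ) := by exact_mod_cast (by omega : 0 < n)
  have h2n : (0:ℝ) < (2:ℝ)^n := by positivity
  have hstep : BBv μ Y k ≤ ((2:ℝ)^n)⁻¹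
      * ∑ m ∈ Finset.Ico (n-k+1) n, (1/(n:ℝ))^(n-m) * (3*(n:ℝ)/m) * ((AFm n m).card : ℝ) := by
    rw [Finset.mul_sum, BBv]
    apply Finset.sum_le_sum
    intro m hm
    obtain ⟨hm1, hm2⟩ := Finset.mem_Ico.mp hm
    have hm0 : 1 ≤ m := by omega
    have hdpos := deltaC_pos hk2 hkn (m := m) hm0
    have ha : ∑ x ∈ AFm n m, rpm μ Y 0 x = ((AFm n m).card : ℝ) * ((2:ℝ)^n)⁻¹ := by
      rw [Finset.sum_congr rfl (fun x _ => huni x), Finset.sum_const, nsmul_eq_mul]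
    rw [ha]
    calc (1/(n:ℝ))^(n-m) * ((((AFm n m).card : ℝ) * ((2:ℝ)^n)⁻¹) / deltaC n m)
        = ((2:ℝ)^n)⁻¹ * ((1/(n:ℝ))^(n-m) * (((AFm n m).card : ℝ) / deltaC n m)) := by
          ring
      _ ≤ ((2:ℝ)^n)⁻¹ * ((1/(n:ℝ))^(n-m) * (3*(n:ℝ)/m) * ((AFm n m).card : ℝ)) := by
          apply mul_le_mul_of_nonneg_left _ (by positivity)
          have hcd : (((AFm n m).card : ℝ) / deltaC n m)
              ≤ (3*(n:ℝ)/m) * ((AFm n m).card : ℝ) := by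
            have h1 := invdelta_le hk2 hkn hY hm0
            have hc0 : (0:ℝ) ≤ ((AFm n m).card : ℝ) := by positivity
            calc (((AFm n m).card : ℝ) / deltaC n m)
                = (1/deltaC n m) * ((AFm n m).card : ℝ) := by ring
              _ ≤ (3*(n:ℝ)/m) * ((AFm n m).card : ℝ) :=
                  mul_le_mul_of_nonneg_right h1 hc0
          calc (1/(n:ℝ))^(n-m) * (((AFm n m).card : ℝ) / deltaC n m)
              ≤ (1/(n:ℝ))^(n-m) * ((3*(n:ℝ)/m) * ((AFm n m).card : ℝ)) :=
                mul_le_mul_of_nonneg_left hcd (by positivity)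
            _ = (1/(n:ℝ))^(n-m) * (3*(n:ℝ)/m) * ((AFm n m).card : ℝ) := by ring
  have hre : ∑ m ∈ Finset.Ico (n-k+1) n, (1/(n:ℝ))^(n-m) * (3*(n:ℝ)/m) * ((AFm n m).card : ℝ)
      = ∑ j ∈ Finset.Ico 1 k, (1/(n:ℝ))^j * (3*(n:ℝ)/((n-j:ℕ):ℝ))
          * (∑ j' ∈ Finset.Ico 1 (j+1), (n.choose j' : ℝ)) := by
    apply Finset.sum_nbij' (fun m => n - m) (fun j => n - j)
    · intro m hm; obtain ⟨h1, h2⟩ := Finset.mem_Ico.mp hm; rw [Finset.mem_Ico]; omega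
    · intro j hj; obtain ⟨h1, h2⟩ := Finset.mem_Ico.mp hj; rw [Finset.mem_Ico]; omega
    · intro m hm; obtain ⟨h1, h2⟩ := Finset.mem_Ico.mp hm; omega
    · intro j hj; obtain ⟨h1, h2⟩ := Finset.mem_Ico.mp hj; omega
    · intro m hm
      obtain ⟨h1, h2⟩ := Finset.mem_Ico.mp hm
      have e1 : n - (n - m) = m := by omega
      rw [e1]
      congr 1
      rw [card_AFm]
      rw [Nat.cast_sum]
      apply Finset.sum_nbij' (fun m' => n - m') (fun j' => n - j')
      · intro m' hm'; obtain ⟨g1, g2⟩ := Finset.mem_Ico.mp hm'; rw [Finset.mem_Ico]; omega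
      · intro j' hj'; obtain ⟨g1, g2⟩ := Finset.mem_Ico.mp hj'; rw [Finset.mem_Ico]; omega
      · intro m' hm'; obtain ⟨g1, g2⟩ := Finset.mem_Ico.mp hm'; omega
      · intro j' hj'; obtain ⟨g1, g2⟩ := Finset.mem_Ico.mp hj'; omega
      · intro m' hm'
        obtain ⟨g1, g2⟩ := Finset.mem_Ico.mp hm'
        have : n.choose (n - m') = n.choose m' := Nat.choose_symm (by omega)
        rw [this]
  calc BBv μ Y k ≤ ((2:ℝ)^n)⁻¹
      * ∑ m ∈ Finset.Ico (n-k+1) n, (1/(n:ℝ))^(n-m) * (3*(n:ℝ)/m) * ((AFm n m).card : ℝ) :=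
        hstep
    _ ≤ ((2:ℝ)^n)⁻¹ * 60 := by
        apply mul_le_mul_of_nonneg_left _ (by positivity)
        rw [hre]
        exact sum_bound2 hk2 hkn
    _ = 60/(2:ℝ)^n := by ring

end Final

end JumpLB

open JumpLB

/-- There is an absolute constant `C` such that for all `n` and
`k ∈ [2..n]`, for the (1+1) EA with mutation rate `1/n` maximizing `Jump_{n,k}`, with
`N = {x : ‖x‖₁ ∈ [0..n-k]}` and `p_k = (1-1/n)^{n-k}·n^{-k}`:
(1) started from an arbitrary search point different from `(1,…,1)`, with probability
at least `1 - C/n` some current search point lies in `N`, and the expected run time is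
at least `(1 - C/n)·p_k⁻¹`;
(2) started from a uniformly random search point, with probability at least
`1 - C·2^{-n}` some current search point lies in `N`, and the expected run time is at
least `(1 - C·2^{-n})·p_k⁻¹`. -/
theorem jump_lower_bound :
    ∃ C : ℝ, ∀ (n k : ℕ), 2 ≤ k → k ≤ n →
      ∀ (Ω : Type) (_ : MeasurableSpace Ω) (μ : Measure Ω), IsProbabilityMeasure μ →
        ∀ Y : ℕ → Ω → Fin n → Bool,
          IsEARun μ n (1 / n) (jumpF n k) Y →
          -- (1) arbitrary initialization with a fixed non-optimal search point
          ((∀ x₀ : Fin n → Bool, x₀ ≠ (fun _ => true) → μ {ω | Y 0 ω = x₀} = 1 →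
            ENNReal.ofReal (1 - C / n)
                ≤ μ {ω | ∃ t : ℕ, onesCount n (Y t ω) ≤ n - k} ∧
            ENNReal.ofReal
                ((1 - C / n) / ((1 - 1 / (n : ℝ)) ^ (n - k) / (n : ℝ) ^ k))
              ≤ ∑' t : ℕ, μ {ω | ∀ r ≤ t, Y r ω ≠ fun _ => true}) ∧
          -- (2) uniformly random initialization
          ((∀ x : Fin n → Bool, μ {ω | Y 0 ω = x} = ((2 : ℝ≥0∞) ^ n)⁻¹) →
            ENNReal.ofReal (1 - C / 2 ^ n)
                ≤ μ {ω | ∃ t : ℕ, onesCount n (Y t ω) ≤ n - k} ∧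
            ENNReal.ofReal
                ((1 - C / 2 ^ n) / ((1 - 1 / (n : ℝ)) ^ (n - k) / (n : ℝ) ^ k))
              ≤ ∑' t : ℕ, μ {ω | ∀ r ≤ t, Y r ω ≠ fun _ => true})) := by
  
  use 100
  intro n k hk2 hkn Ω inst μ hprob Y hY
  haveI := hprob
  have hn : 2 ≤ n := le_trans hk2 hkn
  have hn0 : (0:ℝ) < (n:ℝ) := by exact_mod_cast (by omega : 0 < n)
  have hpk := pkR_pos (n := n) (k := k) hk2 hkn
  have hpkdef : (1 - 1 / (n : ℝ)) ^ (n - k) / (n : ℝ) ^ k = pkR n k := rfl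
  constructor
  · intro x₀ hx0ne hx0
    have hopt0 : μ {ω | Y 0 ω = optP n} = 0 := by
      have hsub : {ω | Y 0 ω = optP n} ⊆ {ω | Y 0 ω = x₀}ᶜ := by
        intro ω h
        simp only [Set.mem_compl_iff, Set.mem_setOf_eq] at *
        intro h2
        exact hx0ne (by rw [← h2, h]; rfl)
      have hmeas : MeasurableSet {ω | Y 0 ω = x₀} := meas_event hY.1 0 {x₀}
      have hle := measure_mono (μ := μ) hsub
      rw [MeasureTheory.prob_compl_eq_one_sub hmeas, hx0] at hle
      simpa using hle
    have hrpm0 : rpm μ Y 0 (optP n) = 0 := by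
      rw [rpm, hopt0]; simp
    have hb := BBv_le1 hk2 hkn hY
    have hnum : 1 - 100/(n:ℝ) ≤ 1 - (0 + 12/(n:ℝ)) := by
      have : (12:ℝ)/(n:ℝ) ≤ 100/(n:ℝ) := by
        apply div_le_div_of_nonneg_right (by norm_num) hn0.le
      linarith
    constructor
    · have h := hit_bound hk2 hkn hY hb (le_refl (0:ℝ)) (by rw [hopt0]; simp)
      exact le_trans (ENNReal.ofReal_le_ofReal hnum) h
    · have h := runtime_bound hk2 hkn hY hb
      refine le_trans ?_ h
      apply ENNReal.ofReal_le_ofReal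
      rw [hpkdef, hrpm0]
      apply div_le_div_of_nonneg_right _ hpk.le
      linarith
  · intro huni
    have h2p : (0:ℝ) < (2:ℝ)^n := by positivity
    have hrpmu : ∀ x : Fin n → Bool, rpm μ Y 0 x = ((2:ℝ)^n)⁻¹ := by
      intro x
      rw [rpm, huni x, ENNReal.toReal_inv, ENNReal.toReal_pow]
      norm_num
    have hb := BBv_le2 hk2 hkn hY hrpmu
    have hoptval : μ {ω | Y 0 ω = optP n} = ENNReal.ofReal (((2:ℝ)^n)⁻¹) := by
      rw [huni (optP n)]
      rw [ENNReal.ofReal_inv_of_pos h2p, ENNReal.ofReal_pow (by norm_num : (0:ℝ) ≤ 2)]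
      simp [ENNReal.ofReal_ofNat]
    have hnum : 1 - 100/(2:ℝ)^n ≤ 1 - (((2:ℝ)^n)⁻¹ + 60/(2:ℝ)^n) := by
      rw [inv_eq_one_div]
      have h1 : (1:ℝ)/(2:ℝ)^n + 60/(2:ℝ)^n = 61/(2:ℝ)^n := by ring
      rw [h1]
      have : (61:ℝ)/(2:ℝ)^n ≤ 100/(2:ℝ)^n := by
        apply div_le_div_of_nonneg_right (by norm_num) h2p.le
      linarith
    constructor
    · have h := hit_bound hk2 hkn hY hb (by positivity) (le_of_eq hoptval)
      exact le_trans (ENNReal.ofReal_le_ofReal hnum) h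
    · have h := runtime_bound hk2 hkn hY hb
      refine le_trans ?_ h
      apply ENNReal.ofReal_le_ofReal
      rw [hpkdef, hrpmu (optP n)]
      apply div_le_div_of_nonneg_right _ hpk.le
      rw [inv_eq_one_div] at hnum ⊢
      linarith
end
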